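/- arXiv:1902.03707 — 6 statements merged into one kernel-verified Lean document; each statement's English description precedes it below -/
import Mathlib

section
/- If P ≥ P* := 1/‖Φ‖_∞, where Φ is the unique solution of -ΔΦ = 1 in Ω with Φ = 0 on ∂Ω, then for every λ > 0 the problem Δu = λ f(x)/u² + P in Ω, 0 < u ≤ 1 in Ω, u = 1 on ∂Ω, has no positive classical solution. -/
/-!
If `u` were a solution, `w = u + P Φ` would satisfy `Δw = λ f / u² ≥ 0` in `Ω` and `w = 1` on
`∂Ω`, so `w ≤ 1` by the weak maximum principle. At a maximum point `x₀` of `Φ` we have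
`P Φ(x₀) ≥ P* ‖Φ‖_∞ = 1`, which forces `u(x₀) ≤ 0`.

The maximum principle is proved by perturbing `w` to `w + δ‖x‖²`: its Laplacian is strictly
positive, whereas at an interior maximum every second directional derivative is `≤ 0`.
-/

open Set

noncomputable def lap {N : ℕ} (u : EuclideanSpace ℝ (Fin N) → ℝ)
    (x : EuclideanSpace ℝ (Fin N)) : ℝ :=
  ∑ i, fderiv ℝ (fun y => fderiv ℝ u y (EuclideanSpace.single i 1)) x (EuclideanSpace.single i 1)

open Filter Topology

theorem IsLocalMax.deriv_deriv_nonpos {φ : ℝ → ℝ} {a : ℝ} (hmax : IsLocalMax φ a)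
    (hc : ContinuousAt φ a) : deriv (deriv φ) a ≤ 0 := by
  -- If `φ''(a) > 0`, the second derivative test makes `a` a local minimum as well, so `φ` is
  -- locally constant, contradicting `φ' > 0` to the right of `a`.
  by_contra! hpos
  have hmin : IsLocalMin φ a := isLocalMin_of_deriv_deriv_pos hpos hmax.deriv_eq_zero hc
  have hconst : ∀ᶠ t in 𝓝 a, φ t = φ a := by
    filter_upwards [hmax, hmin] with t h₁ h₂ using le_antisymm h₁ h₂
  have hderiv_zero : ∀ᶠ t in 𝓝 a, deriv φ t = 0 := by
    filter_upwards [hconst.eventually_nhds] with t (ht : φ =ᶠ[𝓝 t] fun _ => φ a)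
    rw [ht.deriv_eq, deriv_const]
  have hderiv_pos : ∀ᶠ t in 𝓝[>] a, 0 < deriv φ t :=
    deriv_pos_right_of_sign_deriv <| nhdsWithin_le_nhds <|
      eventually_nhdsWithin_sign_eq_of_deriv_pos hpos hmax.deriv_eq_zero
  obtain ⟨t, ht₀, htpos⟩ := ((hderiv_zero.filter_mono nhdsWithin_le_nhds).and hderiv_pos).exists
  exact htpos.ne' ht₀

section
variable {E : Type*} [NormedAddCommGroup E] [NormedSpace ℝ E] {u : E → ℝ} {z : E}

theorem ContDiffAt.differentiableAt_fderiv_apply (hu : ContDiffAt ℝ 2 u z) (v : E) :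
    DifferentiableAt ℝ (fun y => fderiv ℝ u y v) z :=
  ((hu.fderiv_right (m := 1) le_rfl).differentiableAt one_ne_zero).clm_apply
    (differentiableAt_const v)

theorem ContDiffAt.eventually_differentiableAt (hu : ContDiffAt ℝ 2 u z) :
    ∀ᶠ y in 𝓝 z, DifferentiableAt ℝ u y := by
  filter_upwards [hu.eventually (by simp)] with y hy using hy.differentiableAt two_ne_zero

theorem IsLocalMax.fderiv_fderiv_apply_nonpos (hmax : IsLocalMax u z) (hu : ContDiffAt ℝ 2 u z)
    (v : E) : fderiv ℝ (fun y => fderiv ℝ u y v) z v ≤ 0 := by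
  set L : ℝ → E := fun t => z + t • v
  have hL : ∀ t, HasDerivAt L v t := fun t => by
    simpa only [one_smul] using ((hasDerivAt_id' t).smul_const v).const_add z
  have hLc : Continuous L := by fun_prop
  have hL0 : L 0 = z := by simp [L]
  have hderiv : deriv (u ∘ L) =ᶠ[𝓝 0] (fun y => fderiv ℝ u y v) ∘ L := by
    filter_upwards [(hL0 ▸ hLc.tendsto 0).eventually hu.eventually_differentiableAt] with t ht
    exact (ht.hasFDerivAt.comp_hasDerivAt t (hL t)).deriv
  have hψ : HasFDerivAt (fun y => fderiv ℝ u y v) (fderiv ℝ (fun y => fderiv ℝ u y v) z) (L 0) :=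
    hL0 ▸ (hu.differentiableAt_fderiv_apply v).hasFDerivAt
  have hmaxL : IsLocalMax (u ∘ L) 0 :=
    (hL0 ▸ hmax : IsLocalMax u (L 0)).comp_continuous hLc.continuousAt
  have h := hmaxL.deriv_deriv_nonpos (hu.continuousAt.comp_of_eq hLc.continuousAt hL0)
  rwa [hderiv.deriv_eq, (hψ.comp_hasDerivAt 0 (hL 0)).deriv] at h

end

section Laplacian

variable {N : ℕ} {u v : EuclideanSpace ℝ (Fin N) → ℝ} {x : EuclideanSpace ℝ (Fin N)}

theorem lap_add (hu : ContDiffAt ℝ 2 u x) (hv : ContDiffAt ℝ 2 v x) :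
    lap (u + v) x = lap u x + lap v x := by
  simp only [lap, ← Finset.sum_add_distrib]
  refine Finset.sum_congr rfl fun i _ => ?_
  set e := EuclideanSpace.single i (1 : ℝ)
  have h : (fun y => fderiv ℝ (u + v) y e) =ᶠ[𝓝 x] fun y => fderiv ℝ u y e + fderiv ℝ v y e := by
    filter_upwards [hu.eventually_differentiableAt, hv.eventually_differentiableAt] with y hu hv
    rw [fderiv_add hu hv]; rfl
  rw [h.fderiv_eq, fderiv_fun_add (hu.differentiableAt_fderiv_apply e)
    (hv.differentiableAt_fderiv_apply e)]; rfl

theorem lap_const_smul (c : ℝ) (hu : ContDiffAt ℝ 2 u x) : lap (c • u) x = c * lap u x := by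
  simp only [lap, Finset.mul_sum]
  refine Finset.sum_congr rfl fun i _ => ?_
  set e := EuclideanSpace.single i (1 : ℝ)
  have h : (fun y => fderiv ℝ (c • u) y e) =ᶠ[𝓝 x] fun y => c * fderiv ℝ u y e := by
    filter_upwards [hu.eventually_differentiableAt] with y hu
    rw [fderiv_const_smul hu]; rfl
  rw [h.fderiv_eq, fderiv_const_mul (hu.differentiableAt_fderiv_apply e)]; rfl

theorem lap_norm_sq : lap (fun y : EuclideanSpace ℝ (Fin N) => ‖y‖ ^ 2) x = 2 * N := by
  have h : ∀ e : EuclideanSpace ℝ (Fin N),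
      (fun y => fderiv ℝ (fun y : EuclideanSpace ℝ (Fin N) => ‖y‖ ^ 2) y e) =
        ⇑((2 : ℝ) • innerSL ℝ e) := by
    intro e; ext y
    simp [fderiv_norm_sq_apply, real_inner_comm]
  simp only [lap, h, ContinuousLinearMap.fderiv]
  simp [mul_comm]

end Laplacian

section MaximumPrinciple

variable {N : ℕ} {Ω : Set (EuclideanSpace ℝ (Fin N))} {w : EuclideanSpace ℝ (Fin N) → ℝ}

theorem exists_mem_frontier_le_of_lap_pos (hΩb : Bornology.IsBounded Ω)
    (hwc : ContinuousOn w (closure Ω)) (hw2 : ContDiffOn ℝ 2 w Ω) (hlap : ∀ x ∈ Ω, 0 < lap w x)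
    {x : EuclideanSpace ℝ (Fin N)} (hx : x ∈ closure Ω) : ∃ z ∈ frontier Ω, w x ≤ w z := by
  obtain ⟨z, hz, hzmax⟩ := hΩb.isCompact_closure.exists_isMaxOn ⟨x, hx⟩ hwc
  refine ⟨z, ⟨hz, fun hzΩ => ?_⟩, hzmax hx⟩
  have hΩz : Ω ∈ 𝓝 z := mem_interior_iff_mem_nhds.1 hzΩ
  have hloc : IsLocalMax w z := mem_of_superset hΩz fun y hy => hzmax (subset_closure hy)
  exact (hlap z (interior_subset hzΩ)).not_ge <| Finset.sum_nonpos fun i _ =>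
    hloc.fderiv_fderiv_apply_nonpos (hw2.contDiffAt hΩz) _

theorem le_of_lap_nonneg_of_le_on_frontier (hN : 0 < N) (hΩo : IsOpen Ω)
    (hΩb : Bornology.IsBounded Ω) (hwc : ContinuousOn w (closure Ω)) (hw2 : ContDiffOn ℝ 2 w Ω)
    (hlap : ∀ x ∈ Ω, 0 ≤ lap w x) {M : ℝ} (hM : ∀ z ∈ frontier Ω, w z ≤ M)
    {x : EuclideanSpace ℝ (Fin N)} (hx : x ∈ closure Ω) : w x ≤ M := by
  obtain ⟨R, hR⟩ := isBounded_iff_forall_norm_le.1 hΩb.closure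
  have hsq : ∀ y ∈ closure Ω, ‖y‖ ^ 2 ≤ R ^ 2 := fun y hy =>
    pow_le_pow_left₀ (norm_nonneg y) (hR y hy) 2
  have hperturbed : ∀ δ > 0, w x ≤ M + δ * R ^ 2 := by
    intro δ hδ
    have hq : ContDiff ℝ 2 fun y : EuclideanSpace ℝ (Fin N) => ‖y‖ ^ 2 := contDiff_norm_sq ℝ
    have hlapδ : ∀ y ∈ Ω, 0 < lap (w + δ • fun y => ‖y‖ ^ 2) y := by
      intro y hy
      rw [lap_add (v := δ • fun y => ‖y‖ ^ 2) (hw2.contDiffAt (hΩo.mem_nhds hy))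
          (hq.contDiffAt.const_smul δ),
        lap_const_smul δ hq.contDiffAt, lap_norm_sq]
      have := hlap y hy
      positivity
    obtain ⟨z, hz, hxz⟩ := exists_mem_frontier_le_of_lap_pos hΩb
      (hwc.add (hq.continuous.continuousOn.const_smul δ))
      (hw2.add (hq.contDiffOn.const_smul δ)) hlapδ hx
    simp only [Pi.add_apply, Pi.smul_apply, smul_eq_mul] at hxz
    linarith [hM z hz, mul_le_mul_of_nonneg_left (hsq z (frontier_subset_closure hz)) hδ.le,
      mul_nonneg hδ.le (sq_nonneg ‖x‖)]
  have hlim : Tendsto (fun δ => M + δ * R ^ 2) (𝓝[>] 0) (𝓝 M) := by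
    have hc : Continuous fun δ : ℝ => M + δ * R ^ 2 := by fun_prop
    simpa using (hc.tendsto 0).mono_left nhdsWithin_le_nhds
  exact ge_of_tendsto hlim (eventually_nhdsWithin_of_forall hperturbed)

end MaximumPrinciple

theorem exists_mem_isMaxOn_closure_of_frontier_eq_zero {X : Type*} [PseudoMetricSpace X]
    [ProperSpace X] {Ω : Set X} (hΩb : Bornology.IsBounded Ω) {Φ : X → ℝ}
    (hΦc : ContinuousOn Φ (closure Ω)) (hΦbd : ∀ x ∈ frontier Ω, Φ x = 0) {x : X} (hx : x ∈ Ω)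
    (hpos : 0 < Φ x) : ∃ x₀ ∈ Ω, IsMaxOn Φ (closure Ω) x₀ := by
  obtain ⟨x₀, hx₀, hmax⟩ := hΩb.isCompact_closure.exists_isMaxOn ⟨x, subset_closure hx⟩ hΦc
  refine ⟨x₀, by_contra fun hx₀Ω => ?_, hmax⟩
  have := hΦbd x₀ ⟨hx₀, fun h => hx₀Ω (interior_subset h)⟩
  linarith [isMaxOn_iff.1 hmax x (subset_closure hx)]

theorem IsMaxOn.biSup_eq_of_nonneg {X : Type*} {s : Set X} {f : X → ℝ} {a : X} (ha : a ∈ s)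
    (hmax : IsMaxOn f s a) (h0 : 0 ≤ f a) : ⨆ x ∈ s, f x = f a := by
  -- `h0` is needed because the inner supremum over `x ∈ s` is `sSup ∅ = 0` when `x ∉ s`.
  rw [← ciSup_subtype_fun ⟨f a, by rintro _ ⟨y, rfl⟩; exact hmax y.2⟩
    (by rw [Real.sSup_empty, hmax.iSup_eq ha]; exact h0), hmax.iSup_eq ha]

theorem stmt0_general {N : ℕ} (Ω : Set (EuclideanSpace ℝ (Fin N)))
    (hΩo : IsOpen Ω) (hΩb : Bornology.IsBounded Ω) (hΩne : Ω.Nonempty)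
    (f : EuclideanSpace ℝ (Fin N) → ℝ)
    (hf0 : ∀ x ∈ closure Ω, 0 ≤ f x)
    (Φ : EuclideanSpace ℝ (Fin N) → ℝ)
    (hΦc : ContinuousOn Φ (closure Ω)) (hΦ2 : ContDiffOn ℝ 2 Φ Ω)
    (hΦeq : ∀ x ∈ Ω, lap Φ x = -1)
    (hΦbd : ∀ x ∈ frontier Ω, Φ x = 0)
    (hΦpos : ∀ x ∈ Ω, 0 < Φ x)
    (Pstar P : ℝ) (hPstar : Pstar = 1 / (⨆ x ∈ Ω, Φ x)) (hP : Pstar ≤ P)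
    (lam : ℝ) (hlam : 0 < lam) :
    ¬ ∃ u : EuclideanSpace ℝ (Fin N) → ℝ,
      ContinuousOn u (closure Ω) ∧ ContDiffOn ℝ 2 u Ω ∧
      (∀ x ∈ Ω, lap u x = lam * f x / (u x) ^ 2 + P) ∧
      (∀ x ∈ Ω, 0 < u x ∧ u x ≤ 1) ∧
      (∀ x ∈ frontier Ω, u x = 1) := by
  rintro ⟨u, huc, hu2, hueq, hub, hubd⟩
  obtain ⟨x, hx⟩ := hΩne
  have hN : 0 < N := Nat.pos_of_ne_zero fun hN => by subst hN; simpa [lap] using hΦeq x hx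
  obtain ⟨x₀, hx₀, hmax⟩ :=
    exists_mem_isMaxOn_closure_of_frontier_eq_zero hΩb hΦc hΦbd hx (hΦpos x hx)
  have hsup : ⨆ x ∈ Ω, Φ x = Φ x₀ :=
    (hmax.on_subset subset_closure).biSup_eq_of_nonneg hx₀ (hΦpos x₀ hx₀).le
  have hsubharmonic : u x₀ + P * Φ x₀ ≤ 1 := by
    refine le_of_lap_nonneg_of_le_on_frontier hN hΩo hΩb (huc.add (hΦc.const_smul P))
      (hu2.add (hΦ2.const_smul P)) (fun y hy => ?_) (fun z hz => ?_) (subset_closure hx₀)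
    · have hy' := hΩo.mem_nhds hy
      rw [lap_add (v := P • Φ) (hu2.contDiffAt hy') ((hΦ2.contDiffAt hy').const_smul P),
        lap_const_smul P (hΦ2.contDiffAt hy'), hueq y hy, hΦeq y hy]
      have hsource : 0 ≤ lam * f y / u y ^ 2 :=
        div_nonneg (mul_nonneg hlam.le (hf0 y (subset_closure hy))) (sq_nonneg _)
      linarith
    · simp [hubd z hz, hΦbd z hz]
  have hPΦ : 1 ≤ P * Φ x₀ := by
    rw [hPstar, hsup, div_le_iff₀ (hΦpos x₀ hx₀)] at hP
    exact hP
  linarith [(hub x₀ hx₀).1]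

/-- If `P ≥ P* = 1/‖Φ‖_∞`, then for every `λ > 0` the problem
`Δu = λ f/u² + P`, `0 < u ≤ 1` in `Ω`, `u = 1` on `∂Ω` has no positive classical solution. -/
theorem stmt0 {N : ℕ} (Ω : Set (EuclideanSpace ℝ (Fin N)))
    (hΩo : IsOpen Ω) (hΩb : Bornology.IsBounded Ω) (hΩne : Ω.Nonempty)
    (f : EuclideanSpace ℝ (Fin N) → ℝ) (hfc : ContinuousOn f (closure Ω))
    (hf0 : ∀ x ∈ closure Ω, 0 ≤ f x) (hfne : ∃ x ∈ Ω, f x ≠ 0)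
    (Φ : EuclideanSpace ℝ (Fin N) → ℝ)
    (hΦc : ContinuousOn Φ (closure Ω)) (hΦ2 : ContDiffOn ℝ 2 Φ Ω)
    (hΦeq : ∀ x ∈ Ω, lap Φ x = -1)
    (hΦbd : ∀ x ∈ frontier Ω, Φ x = 0)
    (hΦpos : ∀ x ∈ Ω, 0 < Φ x)
    (Pstar P : ℝ) (hPstar : Pstar = 1 / (⨆ x ∈ Ω, Φ x)) (hP : Pstar ≤ P)
    (lam : ℝ) (hlam : 0 < lam) :
    ¬ ∃ u : EuclideanSpace ℝ (Fin N) → ℝ,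
      ContinuousOn u (closure Ω) ∧ ContDiffOn ℝ 2 u Ω ∧
      (∀ x ∈ Ω, lap u x = lam * f x / (u x) ^ 2 + P) ∧
      (∀ x ∈ Ω, 0 < u x ∧ u x ≤ 1) ∧
      (∀ x ∈ frontier Ω, u x = 1) :=
  stmt0_general Ω hΩo hΩb hΩne f hf0 Φ hΦc hΦ2 hΦeq hΦbd hΦpos Pstar P hPstar hP lam hlam
end

section
/- For fixed 0 ≤ P < P*, if the problem -Δũ = λf/(1-ũ)² + P in Ω, 0 ≤ ũ < 1 in Ω, ũ = 0 on ∂Ω, admits a classical solution ũ, then λ ≤ (|Ω| - P∫_Ω Φ dx)/(∫_Ω Φ f dx). In particular the supremum λ*_P of voltages λ for which a solution exists is finite. -/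
open Set MeasureTheory

/-- A classical solution of `-Δũ = λ f/(1-ũ)² + P` in `Ω`, `0 ≤ ũ < 1`, `ũ = 0` on `∂Ω`. -/
def IsSolutionT {N : ℕ} (Ω : Set (EuclideanSpace ℝ (Fin N)))
    (f : EuclideanSpace ℝ (Fin N) → ℝ) (P lam : ℝ)
    (u : EuclideanSpace ℝ (Fin N) → ℝ) : Prop :=
  ContinuousOn u (closure Ω) ∧ ContDiffOn ℝ 2 u Ω ∧
  (∀ x ∈ Ω, -(lap u x) = lam * f x / (1 - u x) ^ 2 + P) ∧
  (∀ x ∈ Ω, 0 ≤ u x ∧ u x < 1) ∧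
  (∀ x ∈ frontier Ω, u x = 0)

/-!
Test the equation against `φ_c = g(cΦ)/c`, where `g` is a convex `C²` ramp vanishing on
`(-∞, 1]` with `0 ≤ g' ≤ 1` and `t - 2 ≤ g t ≤ t`. Since `Φ = 0` on `∂Ω`, `φ_c` has compact support
in `Ω`, so integrating by parts twice produces no boundary terms: `∫ (-Δu) φ_c = ∫ u (-Δφ_c)`.
Because `-ΔΦ = 1`, `-Δφ_c = g'(cΦ) - c g''(cΦ) |∇Φ|² ≤ 1`, and `0 ≤ u < 1` bounds the right side
by `|Ω|`, while `-Δu ≥ λ f + P` on the left. As `c → ∞`, `φ_c → Φ` uniformly on `Ω`, giving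
`λ ∫ Φ f + P ∫ Φ ≤ |Ω|`; the integral `∫ Φ f` is positive because `Φ > 0` and `f ≢ 0`.
-/

open Real Filter Topology

noncomputable def rampCutoff (t : ℝ) : ℝ := ∫ s in (1 : ℝ)..t, smoothTransition (s - 1)

lemma continuous_smoothTransition_sub_one : Continuous fun s : ℝ => smoothTransition (s - 1) :=
  smoothTransition.continuous.comp (continuous_sub_right 1)

lemma hasDerivAt_rampCutoff (t : ℝ) : HasDerivAt rampCutoff (smoothTransition (t - 1)) t :=
  (continuous_smoothTransition_sub_one.integral_hasStrictDerivAt 1 t).hasDerivAt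

lemma contDiff_rampCutoff : ContDiff ℝ 2 rampCutoff := by
  rw [show (2 : WithTop ℕ∞) = 1 + 1 by norm_num, contDiff_succ_iff_deriv]
  refine ⟨fun t => (hasDerivAt_rampCutoff t).differentiableAt, by simp, ?_⟩
  rw [funext fun t => (hasDerivAt_rampCutoff t).deriv]
  exact smoothTransition.contDiff.comp (contDiff_id.sub contDiff_const)

lemma rampCutoff_of_le_one {t : ℝ} (ht : t ≤ 1) : rampCutoff t = 0 := by
  rw [rampCutoff, intervalIntegral.integral_congr (g := fun _ => (0 : ℝ)),
    intervalIntegral.integral_zero]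
  intro s hs
  rw [uIcc_of_ge ht] at hs
  exact smoothTransition.zero_of_nonpos (by linarith [hs.2])

lemma rampCutoff_nonneg (t : ℝ) : 0 ≤ rampCutoff t := by
  rcases le_total t 1 with ht | ht
  · rw [rampCutoff_of_le_one ht]
  · exact intervalIntegral.integral_nonneg ht fun s _ => smoothTransition.nonneg _

lemma rampCutoff_le_self {t : ℝ} (ht : 0 ≤ t) : rampCutoff t ≤ t := by
  rcases le_total t 1 with h1 | h1
  · rwa [rampCutoff_of_le_one h1]
  · calc rampCutoff t ≤ ∫ _ in (1 : ℝ)..t, (1 : ℝ) :=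
          intervalIntegral.integral_mono_on h1
            (continuous_smoothTransition_sub_one.intervalIntegrable _ _) intervalIntegrable_const
            fun s _ => smoothTransition.le_one _
      _ ≤ t := by simp

lemma sub_two_le_rampCutoff (t : ℝ) : t - 2 ≤ rampCutoff t := by
  rcases le_total t 2 with h2 | h2
  · linarith [rampCutoff_nonneg t]
  · have hone : ∫ s in (2 : ℝ)..t, smoothTransition (s - 1) = t - 2 := by
      rw [intervalIntegral.integral_congr (g := fun _ => (1 : ℝ))]
      · simp
      intro s hs
      rw [uIcc_of_le h2] at hs
      exact smoothTransition.one_of_one_le (by linarith [hs.1])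
    have hsplit := intervalIntegral.integral_add_adjacent_intervals
      (continuous_smoothTransition_sub_one.intervalIntegrable (μ := volume) 1 2)
      (continuous_smoothTransition_sub_one.intervalIntegrable 2 t)
    rw [hone] at hsplit
    have hfirst : 0 ≤ ∫ s in (1 : ℝ)..2, smoothTransition (s - 1) :=
      intervalIntegral.integral_nonneg one_le_two fun s _ => smoothTransition.nonneg _
    rw [rampCutoff, ← hsplit]
    linarith

-- The indicator discards the values of `Φ` outside `Ω`, about which nothing is assumed.
noncomputable def smoothTruncation {E : Type*} (Ω : Set E) (Φ : E → ℝ) (c : ℝ) : E → ℝ :=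
  Ω.indicator fun x => rampCutoff (c * Φ x) / c

section SmoothTruncation

variable {E : Type*} {Ω : Set E} {Φ : E → ℝ} {c : ℝ}

lemma smoothTruncation_nonneg (hc : 0 ≤ c) (x : E) : 0 ≤ smoothTruncation Ω Φ c x :=
  indicator_nonneg (fun _ _ => div_nonneg (rampCutoff_nonneg _) hc) x

lemma abs_sub_smoothTruncation_le (hc : 0 < c) {x : E} (hx : x ∈ Ω) (hΦx : 0 ≤ Φ x) :
    |Φ x - smoothTruncation Ω Φ c x| ≤ 2 / c := by
  have hle := rampCutoff_le_self (mul_nonneg hc.le hΦx)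
  have hge := sub_two_le_rampCutoff (c * Φ x)
  have hdiv : Φ x - rampCutoff (c * Φ x) / c = (c * Φ x - rampCutoff (c * Φ x)) / c := by
    field_simp
  rw [smoothTruncation, indicator_of_mem hx, hdiv, abs_div, abs_of_pos hc]
  gcongr
  exact abs_le.2 ⟨by linarith, by linarith⟩

section TopologicalSpace

variable [TopologicalSpace E]

lemma closure_inter_preimage_Ici_subset (hΩ : IsOpen Ω) (hΦbd : ∀ x ∈ frontier Ω, Φ x = 0)
    {ε : ℝ} (hε : 0 < ε) : closure Ω ∩ Φ ⁻¹' Ici ε ⊆ Ω := by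
  rintro x ⟨hxcl, hxε⟩
  by_contra hxΩ
  have hx0 : Φ x = 0 := hΦbd x ⟨hxcl, by rwa [hΩ.interior_eq]⟩
  exact hε.not_ge (hx0 ▸ hxε)

lemma tsupport_smoothTruncation_subset (hΩ : IsOpen Ω) (hΦc : ContinuousOn Φ (closure Ω))
    (hΦbd : ∀ x ∈ frontier Ω, Φ x = 0) (hc : 0 < c) : tsupport (smoothTruncation Ω Φ c) ⊆ Ω := by
  refine (closure_minimal ?_ ?_).trans
    (closure_inter_preimage_Ici_subset hΩ hΦbd (one_div_pos.2 hc))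
  · intro x hx
    have hxΩ : x ∈ Ω := support_indicator_subset hx
    refine ⟨subset_closure hxΩ, ?_⟩
    by_contra hlt
    apply hx
    rw [smoothTruncation, indicator_of_mem hxΩ, rampCutoff_of_le_one, zero_div]
    have : Φ x < 1 / c := not_le.1 hlt
    rw [lt_div_iff₀ hc] at this
    linarith
  · exact hΦc.preimage_isClosed_of_isClosed isClosed_closure isClosed_Ici

lemma hasCompactSupport_smoothTruncation (hΩc : IsCompact (closure Ω)) :
    HasCompactSupport (smoothTruncation Ω Φ c) :=
  hΩc.of_isClosed_subset (isClosed_tsupport _) (closure_mono support_indicator_subset)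

lemma smoothTruncation_eventuallyEq (hΩ : IsOpen Ω) {x : E} (hx : x ∈ Ω) :
    smoothTruncation Ω Φ c =ᶠ[𝓝 x] fun y => rampCutoff (c * Φ y) / c := by
  filter_upwards [hΩ.mem_nhds hx] with y hy using indicator_of_mem hy _

end TopologicalSpace

lemma contDiff_smoothTruncation [NormedAddCommGroup E] [NormedSpace ℝ E] (hΩ : IsOpen Ω)
    (hΦc : ContinuousOn Φ (closure Ω)) (hΦ2 : ContDiffOn ℝ 2 Φ Ω)
    (hΦbd : ∀ x ∈ frontier Ω, Φ x = 0) (hc : 0 < c) :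
    ContDiff ℝ 2 (smoothTruncation Ω Φ c) := by
  rw [contDiff_iff_contDiffAt]
  intro x
  by_cases hx : x ∈ Ω
  · refine ContDiffAt.congr_of_eventuallyEq ?_ (smoothTruncation_eventuallyEq hΩ hx)
    exact (contDiff_rampCutoff.contDiffAt.comp x
      (contDiffAt_const.mul (hΦ2.contDiffAt (hΩ.mem_nhds hx)))).div_const c
  · have hxs : x ∉ tsupport (smoothTruncation Ω Φ c) :=
      fun h => hx (tsupport_smoothTruncation_subset hΩ hΦc hΦbd hc h)
    exact contDiffAt_const.congr_of_eventuallyEq (notMem_tsupport_iff_eventuallyEq.1 hxs)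

end SmoothTruncation

section IntegrationByParts

variable {E : Type*} [NormedAddCommGroup E] {Ω : Set E}

section Integrable

variable [MeasurableSpace E] [BorelSpace E] {μ : Measure E} [IsFiniteMeasureOnCompacts μ]

lemma integrable_mul_of_tsupport_subset (hΩ : IsOpen Ω) {u ψ : E → ℝ} (hu : ContinuousOn u Ω)
    (hψ : ContinuousOn ψ Ω) (hψc : HasCompactSupport ψ) (hψΩ : tsupport ψ ⊆ Ω) :
    Integrable (fun x => u x * ψ x) μ :=
  (continuous_of_tsupport fun _ hx => (hu.mul hψ).continuousAt
    (hΩ.mem_nhds (hψΩ (tsupport_mul_subset_right hx)))).integrable_of_hasCompactSupport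
    hψc.mul_left

lemma integrable_mul_of_tsupport_subset' (hΩ : IsOpen Ω) {u ψ : E → ℝ} (hu : ContinuousOn u Ω)
    (hψ : ContinuousOn ψ Ω) (hψc : HasCompactSupport ψ) (hψΩ : tsupport ψ ⊆ Ω) :
    Integrable (fun x => ψ x * u x) μ := by
  simpa only [mul_comm] using integrable_mul_of_tsupport_subset (μ := μ) hΩ hu hψ hψc hψΩ

end Integrable

variable [NormedSpace ℝ E] {u φ : E → ℝ}

lemma continuousOn_fderiv_fderiv_apply (hΩ : IsOpen Ω) (hu : ContDiffOn ℝ 2 u Ω) (v w : E) :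
    ContinuousOn (fun x => fderiv ℝ (fun y => fderiv ℝ u y v) x w) Ω :=
  (((hu.fderiv_of_isOpen hΩ (by norm_num)).clm_apply contDiffOn_const)
    |>.continuousOn_fderiv_of_isOpen hΩ le_rfl).clm_apply continuousOn_const

variable [MeasurableSpace E] [BorelSpace E] {μ : Measure E}

lemma integrable_mul_fderiv_fderiv [IsFiniteMeasureOnCompacts μ] (hΩ : IsOpen Ω)
    (hu : ContinuousOn u Ω) (hφ : ContDiff ℝ 2 φ) (hφc : HasCompactSupport φ)
    (hφΩ : tsupport φ ⊆ Ω) (v : E) :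
    Integrable (fun x => u x * fderiv ℝ (fun y => fderiv ℝ φ y v) x v) μ :=
  integrable_mul_of_tsupport_subset hΩ hu
    (continuousOn_fderiv_fderiv_apply isOpen_univ hφ.contDiffOn v v |>.mono (subset_univ Ω))
    ((hφc.fderiv_apply (𝕜 := ℝ) v).fderiv_apply (𝕜 := ℝ) v)
    (((tsupport_fderiv_apply_subset ℝ v).trans (tsupport_fderiv_apply_subset ℝ v)).trans hφΩ)

variable [FiniteDimensional ℝ E] [μ.IsAddHaarMeasure]

theorem integral_mul_fderiv_fderiv_comm (hΩ : IsOpen Ω) (hu : ContDiffOn ℝ 2 u Ω)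
    (hφ : ContDiff ℝ 2 φ) (hφc : HasCompactSupport φ) (hφΩ : tsupport φ ⊆ Ω) (v : E) :
    ∫ x, u x * fderiv ℝ (fun y => fderiv ℝ φ y v) x v ∂μ
      = ∫ x, φ x * fderiv ℝ (fun y => fderiv ℝ u y v) x v ∂μ := by
  have hu1 : ContDiffOn ℝ 1 (fun y => fderiv ℝ u y v) Ω :=
    (hu.fderiv_of_isOpen hΩ (by norm_num)).clm_apply contDiffOn_const
  have hφ1 : ContDiff ℝ 1 (fun y => fderiv ℝ φ y v) :=
    (hφ.fderiv_right (by norm_num)).clm_apply contDiff_const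
  have hdφc := hφc.fderiv_apply (𝕜 := ℝ) v
  have hdφΩ := (tsupport_fderiv_apply_subset ℝ v).trans hφΩ
  rw [integral_mul_fderiv_eq_neg_fderiv_mul_of_integrable
      (integrable_mul_of_tsupport_subset hΩ hu1.continuousOn hφ1.continuous.continuousOn hdφc hdφΩ)
      (integrable_mul_fderiv_fderiv hΩ hu.continuousOn hφ hφc hφΩ v)
      (integrable_mul_of_tsupport_subset hΩ hu.continuousOn hφ1.continuous.continuousOn hdφc hdφΩ)
      (fun x hx => (hu.differentiableOn (by norm_num)).differentiableAt (hΩ.mem_nhds (hdφΩ hx)))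
      (fun x _ => hφ1.differentiable one_ne_zero x),
    integral_mul_fderiv_eq_neg_fderiv_mul_of_integrable
      (integrable_mul_of_tsupport_subset' hΩ hu1.continuousOn hφ1.continuous.continuousOn hdφc hdφΩ)
      (integrable_mul_of_tsupport_subset' hΩ (continuousOn_fderiv_fderiv_apply hΩ hu v v)
        hφ.continuous.continuousOn hφc hφΩ)
      (integrable_mul_of_tsupport_subset' hΩ hu1.continuousOn hφ.continuous.continuousOn hφc hφΩ)
      (fun x _ => hφ.differentiable (by norm_num) x)
      (fun x hx => (hu1.differentiableOn one_ne_zero).differentiableAt (hΩ.mem_nhds (hφΩ hx)))]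
  simp only [mul_comm]

end IntegrationByParts

section Laplacian

variable {N : ℕ} {Ω : Set (EuclideanSpace ℝ (Fin N))} {u φ : EuclideanSpace ℝ (Fin N) → ℝ}

lemma Filter.EventuallyEq.lap_eq {x : EuclideanSpace ℝ (Fin N)} (h : u =ᶠ[𝓝 x] φ) :
    lap u x = lap φ x := by
  unfold lap
  refine Finset.sum_congr rfl fun i _ => ?_
  have hd : (fun y => fderiv ℝ u y (EuclideanSpace.single i 1))
      =ᶠ[𝓝 x] fun y => fderiv ℝ φ y (EuclideanSpace.single i 1) :=
    (h.fderiv (𝕜 := ℝ)).mono fun y hy => by simp only [hy]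
  rw [hd.fderiv_eq]

lemma lap_eq_zero_of_notMem_tsupport {x : EuclideanSpace ℝ (Fin N)} (hx : x ∉ tsupport u) :
    lap u x = 0 := by
  rw [(notMem_tsupport_iff_eventuallyEq.1 hx).lap_eq]
  simp [lap]

lemma tsupport_lap_subset : tsupport (lap u) ⊆ tsupport u :=
  closure_minimal (fun _ hx => by_contra fun h => hx (lap_eq_zero_of_notMem_tsupport h))
    (isClosed_tsupport u)

lemma HasCompactSupport.lap (hu : HasCompactSupport u) : HasCompactSupport (lap u) :=
  IsCompact.of_isClosed_subset hu (isClosed_tsupport _) tsupport_lap_subset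

lemma continuousOn_lap (hΩ : IsOpen Ω) (hu : ContDiffOn ℝ 2 u Ω) : ContinuousOn (lap u) Ω :=
  continuousOn_finsetSum _ fun _ _ => continuousOn_fderiv_fderiv_apply hΩ hu _ _

lemma lap_comp (hΩ : IsOpen Ω) {Φ : EuclideanSpace ℝ (Fin N) → ℝ} (hΦ : ContDiffOn ℝ 2 Φ Ω)
    {G G' G'' : ℝ → ℝ} (hG : ∀ t, HasDerivAt G (G' t) t) (hG' : ∀ t, HasDerivAt G' (G'' t) t)
    {x : EuclideanSpace ℝ (Fin N)} (hx : x ∈ Ω) :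
    lap (fun y => G (Φ y)) x = G' (Φ x) * lap Φ x
      + G'' (Φ x) * ∑ i, fderiv ℝ Φ x (EuclideanSpace.single i 1) ^ 2 := by
  have hΦd : ∀ y ∈ Ω, DifferentiableAt ℝ Φ y := fun y hy =>
    (hΦ.contDiffAt (hΩ.mem_nhds hy)).differentiableAt (by norm_num)
  have hsecond : ∀ i : Fin N,
      fderiv ℝ (fun y => fderiv ℝ (fun z => G (Φ z)) y (EuclideanSpace.single i 1)) x
          (EuclideanSpace.single i 1)
        = G' (Φ x) * fderiv ℝ (fun y => fderiv ℝ Φ y (EuclideanSpace.single i 1)) x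
            (EuclideanSpace.single i 1)
          + G'' (Φ x) * fderiv ℝ Φ x (EuclideanSpace.single i 1) ^ 2 := by
    intro i
    have hfirst : (fun y => fderiv ℝ (fun z => G (Φ z)) y (EuclideanSpace.single i 1))
        =ᶠ[𝓝 x] fun y => G' (Φ y) * fderiv ℝ Φ y (EuclideanSpace.single i 1) := by
      filter_upwards [hΩ.mem_nhds hx] with y hy
      rw [HasFDerivAt.fderiv (f := fun z => G (Φ z))
        ((hG (Φ y)).comp_hasFDerivAt y (hΦd y hy).hasFDerivAt)]
      rfl
    have hdΦ : DifferentiableAt ℝ (fun y => fderiv ℝ Φ y (EuclideanSpace.single i 1)) x :=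
      (((hΦ.contDiffAt (hΩ.mem_nhds hx)).fderiv_right (by norm_num)).clm_apply
        contDiffAt_const).differentiableAt one_ne_zero
    rw [hfirst.fderiv_eq, HasFDerivAt.fderiv
      (f := fun y => G' (Φ y) * fderiv ℝ Φ y (EuclideanSpace.single i 1))
      (((hG' (Φ x)).comp_hasFDerivAt x (hΦd x hx).hasFDerivAt).mul hdΦ.hasFDerivAt)]
    simp only [add_apply, smul_apply, smul_eq_mul, Function.comp_apply]
    ring
  simp only [lap, hsecond, Finset.sum_add_distrib, Finset.mul_sum]

theorem setIntegral_mul_lap_comm (hΩ : IsOpen Ω) (hu : ContDiffOn ℝ 2 u Ω) (hφ : ContDiff ℝ 2 φ)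
    (hφc : HasCompactSupport φ) (hφΩ : tsupport φ ⊆ Ω) :
    ∫ x in Ω, u x * lap φ x = ∫ x in Ω, φ x * lap u x := by
  rw [setIntegral_eq_integral_of_forall_compl_eq_zero fun x hx => by
      rw [lap_eq_zero_of_notMem_tsupport fun h => hx (hφΩ h), mul_zero],
    setIntegral_eq_integral_of_forall_compl_eq_zero fun x hx => by
      rw [image_eq_zero_of_notMem_tsupport fun h => hx (hφΩ h), zero_mul]]
  simp only [lap, Finset.mul_sum]
  rw [integral_finsetSum _ fun _ _ => integrable_mul_fderiv_fderiv hΩ hu.continuousOn hφ hφc hφΩ _,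
    integral_finsetSum _ fun _ _ => integrable_mul_of_tsupport_subset' hΩ
      (continuousOn_fderiv_fderiv_apply hΩ hu _ _) hφ.continuous.continuousOn hφc hφΩ]
  exact Finset.sum_congr rfl fun _ _ => integral_mul_fderiv_fderiv_comm hΩ hu hφ hφc hφΩ _

lemma neg_lap_smoothTruncation_le_one (hΩ : IsOpen Ω) {Φ : EuclideanSpace ℝ (Fin N) → ℝ}
    (hΦ2 : ContDiffOn ℝ 2 Φ Ω) (hΦeq : ∀ x ∈ Ω, lap Φ x = -1) {c : ℝ} (hc : 0 < c)
    {x : EuclideanSpace ℝ (Fin N)} (hx : x ∈ Ω) : -lap (smoothTruncation Ω Φ c) x ≤ 1 := by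
  have hlin : ∀ t : ℝ, HasDerivAt (fun s => c * s - 1) c t := fun t => by
    simpa using ((hasDerivAt_id t).const_mul c).sub_const 1
  have hG : ∀ t : ℝ,
      HasDerivAt (fun s => rampCutoff (c * s) / c) (smoothTransition (c * t - 1)) t :=
    fun t => by
      simpa [hc.ne'] using ((hasDerivAt_rampCutoff (c * t)).comp t
        ((hasDerivAt_id t).const_mul c)).div_const c
  have hG' : ∀ t : ℝ, HasDerivAt (fun s => smoothTransition (c * s - 1))
      (deriv smoothTransition (c * t - 1) * c) t := fun t =>
    ((smoothTransition.contDiff (n := 1)).differentiable one_ne_zero _).hasDerivAt.comp t (hlin t)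
  rw [(smoothTruncation_eventuallyEq hΩ hx).lap_eq, lap_comp hΩ hΦ2 hG hG' hx, hΦeq x hx]
  have hconvex : 0 ≤ deriv smoothTransition (c * Φ x - 1) * c *
      ∑ i, fderiv ℝ Φ x (EuclideanSpace.single i 1) ^ 2 :=
    mul_nonneg (mul_nonneg smoothTransition.monotone.deriv_nonneg hc.le)
      (Finset.sum_nonneg fun _ _ => sq_nonneg _)
  linarith [smoothTransition.le_one (c * Φ x - 1)]

end Laplacian

section Integrals

variable {X : Type*} [MeasurableSpace X] {μ : Measure X} {Ω : Set X}

lemma setIntegral_mul_le_of_forall_approx (hΩ : MeasurableSet Ω) {w Φ : X → ℝ} {B : ℝ}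
    (hw : IntegrableOn w Ω μ) (hwΦ : IntegrableOn (fun x => w x * Φ x) Ω μ)
    (happrox : ∀ ε > 0, ∃ ψ : X → ℝ, IntegrableOn (fun x => w x * ψ x) Ω μ ∧
      (∀ x ∈ Ω, |Φ x - ψ x| ≤ ε) ∧ ∫ x in Ω, w x * ψ x ∂μ ≤ B) :
    ∫ x in Ω, w x * Φ x ∂μ ≤ B := by
  set I := ∫ x in Ω, |w x| ∂μ
  have hI : 0 ≤ I := integral_nonneg fun _ => abs_nonneg _
  refine le_of_forall_pos_le_add fun δ hδ => ?_
  obtain ⟨ψ, hψi, hψ, hψB⟩ := happrox (δ / (I + 1)) (by positivity)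
  have hdiff : IntegrableOn (fun x => w x * (Φ x - ψ x)) Ω μ := by
    simp_rw [mul_sub]
    exact hwΦ.sub hψi
  have herr : ∫ x in Ω, w x * (Φ x - ψ x) ∂μ ≤ I * (δ / (I + 1)) := by
    rw [← integral_mul_const]
    refine setIntegral_mono_on hdiff (hw.abs.mul_const _) hΩ fun x hx => ?_
    calc w x * (Φ x - ψ x) ≤ |w x| * |Φ x - ψ x| := (le_abs_self _).trans (abs_mul _ _).le
      _ ≤ |w x| * (δ / (I + 1)) := mul_le_mul_of_nonneg_left (hψ x hx) (abs_nonneg _)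
  have hsmall : I * (δ / (I + 1)) ≤ δ := by
    rw [mul_div_assoc', div_le_iff₀ (by positivity)]
    nlinarith
  have hsplit : ∫ x in Ω, w x * Φ x ∂μ
      = ∫ x in Ω, w x * ψ x ∂μ + ∫ x in Ω, w x * (Φ x - ψ x) ∂μ := by
    rw [← integral_add hψi hdiff]
    simp only [mul_sub, add_sub_cancel]
  linarith

lemma setIntegral_pos_of_continuousOn [TopologicalSpace X] [OpensMeasurableSpace X]
    [μ.IsOpenPosMeasure] (hΩ : IsOpen Ω) {g : X → ℝ} (hg : ContinuousOn g Ω)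
    (hgi : IntegrableOn g Ω μ) (hg0 : ∀ x ∈ Ω, 0 ≤ g x) {x₀ : X} (hx₀ : x₀ ∈ Ω) (hgx₀ : g x₀ ≠ 0) :
    0 < ∫ x in Ω, g x ∂μ := by
  rw [setIntegral_pos_iff_support_of_nonneg_ae (ae_restrict_of_forall_mem hΩ.measurableSet hg0) hgi]
  have hopen : IsOpen (Ω ∩ g ⁻¹' {0}ᶜ) := hg.isOpen_inter_preimage hΩ isOpen_compl_singleton
  exact (hopen.measure_pos μ ⟨x₀, hx₀, hgx₀⟩).trans_le (measure_mono fun x hx => ⟨hx.2, hx.1⟩)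

end Integrals

section Torsion

variable {N : ℕ} {Ω : Set (EuclideanSpace ℝ (Fin N))} {Φ : EuclideanSpace ℝ (Fin N) → ℝ}

lemma setIntegral_neg_lap_mul_smoothTruncation_le (hΩ : IsOpen Ω)
    (hΩc : IsCompact (closure Ω)) (hΦc : ContinuousOn Φ (closure Ω)) (hΦ2 : ContDiffOn ℝ 2 Φ Ω)
    (hΦeq : ∀ x ∈ Ω, lap Φ x = -1) (hΦbd : ∀ x ∈ frontier Ω, Φ x = 0)
    {u : EuclideanSpace ℝ (Fin N) → ℝ} (hu2 : ContDiffOn ℝ 2 u Ω)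
    (hu01 : ∀ x ∈ Ω, 0 ≤ u x ∧ u x < 1) {c : ℝ} (hc : 0 < c) :
    ∫ x in Ω, -lap u x * smoothTruncation Ω Φ c x ≤ volume.real Ω := by
  set φ := smoothTruncation Ω Φ c
  have hφ2 : ContDiff ℝ 2 φ := contDiff_smoothTruncation hΩ hΦc hΦ2 hΦbd hc
  have hφc : HasCompactSupport φ := hasCompactSupport_smoothTruncation hΩc
  have hφΩ : tsupport φ ⊆ Ω := tsupport_smoothTruncation_subset hΩ hΦc hΦbd hc
  have hint : IntegrableOn (fun x => u x * -lap φ x) Ω := by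
    simp_rw [mul_neg]
    exact (integrable_mul_of_tsupport_subset hΩ hu2.continuousOn
      (continuousOn_lap isOpen_univ hφ2.contDiffOn |>.mono (subset_univ Ω)) hφc.lap
      (tsupport_lap_subset.trans hφΩ)).neg.integrableOn
  have hvol : volume Ω ≠ ⊤ := (measure_mono subset_closure |>.trans_lt hΩc.measure_lt_top).ne
  calc ∫ x in Ω, -lap u x * φ x = ∫ x in Ω, u x * -lap φ x := by
        simp only [neg_mul, mul_neg, integral_neg, mul_comm (lap u _),
          setIntegral_mul_lap_comm hΩ hu2 hφ2 hφc hφΩ]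
    _ ≤ ∫ _ in Ω, (1 : ℝ) := by
        refine setIntegral_mono_on hint (integrableOn_const hvol) hΩ.measurableSet fun x hx => ?_
        have hlap := neg_lap_smoothTruncation_le_one hΩ hΦ2 hΦeq hc hx
        nlinarith [hu01 x hx]
    _ = volume.real Ω := by simp

lemma IsSolutionT.mul_add_le_neg_lap {f u : EuclideanSpace ℝ (Fin N) → ℝ} {P lam : ℝ}
    (hu : IsSolutionT Ω f P lam u) (hlam : 0 ≤ lam) {x : EuclideanSpace ℝ (Fin N)} (hx : x ∈ Ω)
    (hfx : 0 ≤ f x) : lam * f x + P ≤ -lap u x := by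
  obtain ⟨-, -, hueq, hu01, -⟩ := hu
  have hsq : (1 - u x) ^ 2 ≤ 1 := by nlinarith [hu01 x hx]
  have hdiv : lam * f x ≤ lam * f x / (1 - u x) ^ 2 :=
    le_div_self (mul_nonneg hlam hfx) (by nlinarith [hu01 x hx]) hsq
  rw [hueq x hx]
  linarith

lemma setIntegral_mul_torsion_le_volume (hΩ : IsOpen Ω) (hΩb : Bornology.IsBounded Ω)
    {f : EuclideanSpace ℝ (Fin N) → ℝ} (hfc : ContinuousOn f (closure Ω))
    (hf0 : ∀ x ∈ closure Ω, 0 ≤ f x) (hΦc : ContinuousOn Φ (closure Ω))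
    (hΦ2 : ContDiffOn ℝ 2 Φ Ω) (hΦeq : ∀ x ∈ Ω, lap Φ x = -1)
    (hΦbd : ∀ x ∈ frontier Ω, Φ x = 0) (hΦpos : ∀ x ∈ Ω, 0 < Φ x) {P lam : ℝ} (hlam : 0 < lam)
    {u : EuclideanSpace ℝ (Fin N) → ℝ} (hu : IsSolutionT Ω f P lam u) :
    ∫ x in Ω, (lam * f x + P) * Φ x ≤ volume.real Ω := by
  have hΩc : IsCompact (closure Ω) := hΩb.isCompact_closure
  have hw : ContinuousOn (fun x => lam * f x + P) (closure Ω) :=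
    (continuousOn_const.mul hfc).add continuousOn_const
  have hint : ∀ {g : EuclideanSpace ℝ (Fin N) → ℝ}, ContinuousOn g (closure Ω) →
      IntegrableOn g Ω := fun hg => (hg.integrableOn_compact hΩc).mono_set subset_closure
  refine setIntegral_mul_le_of_forall_approx hΩ.measurableSet (hint hw) (hint (hw.mul hΦc))
    fun ε hε => ?_
  have hc : 0 < 2 / ε := by positivity
  have hφ := contDiff_smoothTruncation hΩ hΦc hΦ2 hΦbd hc
  have hwφ := hint (hw.mul hφ.continuous.continuousOn)
  refine ⟨smoothTruncation Ω Φ (2 / ε), hwφ, fun x hx => ?_, ?_⟩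
  · simpa only [div_div_cancel₀ (two_ne_zero' ℝ)] using
      abs_sub_smoothTruncation_le hc hx (hΦpos x hx).le
  have hlapφ : IntegrableOn (fun x => -lap u x * smoothTruncation Ω Φ (2 / ε) x) Ω :=
    (integrable_mul_of_tsupport_subset hΩ (continuousOn_lap hΩ hu.2.1).neg
      hφ.continuous.continuousOn (hasCompactSupport_smoothTruncation hΩc)
      (tsupport_smoothTruncation_subset hΩ hΦc hΦbd hc)).integrableOn
  calc ∫ x in Ω, (lam * f x + P) * smoothTruncation Ω Φ (2 / ε) x
      ≤ ∫ x in Ω, -lap u x * smoothTruncation Ω Φ (2 / ε) x :=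
        setIntegral_mono_on hwφ hlapφ hΩ.measurableSet fun x hx =>
          mul_le_mul_of_nonneg_right (hu.mul_add_le_neg_lap hlam.le hx (hf0 x (subset_closure hx)))
            (smoothTruncation_nonneg hc.le x)
    _ ≤ volume.real Ω :=
        setIntegral_neg_lap_mul_smoothTruncation_le hΩ hΩc hΦc hΦ2 hΦeq hΦbd hu.2.1 hu.2.2.2.1 hc

lemma le_div_of_isSolutionT (hΩ : IsOpen Ω) (hΩb : Bornology.IsBounded Ω)
    {f : EuclideanSpace ℝ (Fin N) → ℝ} (hfc : ContinuousOn f (closure Ω))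
    (hf0 : ∀ x ∈ closure Ω, 0 ≤ f x) (hfne : ∃ x ∈ Ω, f x ≠ 0) (hΦc : ContinuousOn Φ (closure Ω))
    (hΦ2 : ContDiffOn ℝ 2 Φ Ω) (hΦeq : ∀ x ∈ Ω, lap Φ x = -1)
    (hΦbd : ∀ x ∈ frontier Ω, Φ x = 0) (hΦpos : ∀ x ∈ Ω, 0 < Φ x) {P lam : ℝ} (hlam : 0 < lam)
    {u : EuclideanSpace ℝ (Fin N) → ℝ} (hu : IsSolutionT Ω f P lam u) :
    lam ≤ (volume.real Ω - P * ∫ x in Ω, Φ x) / ∫ x in Ω, Φ x * f x := by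
  have hΩc : IsCompact (closure Ω) := hΩb.isCompact_closure
  have hIΦ : IntegrableOn Φ Ω := (hΦc.integrableOn_compact hΩc).mono_set subset_closure
  have hIΦf : IntegrableOn (fun x => Φ x * f x) Ω :=
    ((hΦc.mul hfc).integrableOn_compact hΩc).mono_set subset_closure
  obtain ⟨x₀, hx₀, hfx₀⟩ := hfne
  have hpos : 0 < ∫ x in Ω, Φ x * f x :=
    setIntegral_pos_of_continuousOn hΩ ((hΦc.mul hfc).mono subset_closure) hIΦf
      (fun x hx => mul_nonneg (hΦpos x hx).le (hf0 x (subset_closure hx))) hx₀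
      (mul_ne_zero (hΦpos x₀ hx₀).ne' hfx₀)
  have hsplit : ∫ x in Ω, (lam * f x + P) * Φ x
      = lam * (∫ x in Ω, Φ x * f x) + P * ∫ x in Ω, Φ x := by
    calc ∫ x in Ω, (lam * f x + P) * Φ x = ∫ x in Ω, (lam * (Φ x * f x) + P * Φ x) := by
          congr 1 with x
          ring
      _ = _ := by
          rw [integral_add (hIΦf.const_mul lam) (hIΦ.const_mul P), integral_const_mul,
            integral_const_mul]
  rw [le_div_iff₀ hpos]
  linarith [setIntegral_mul_torsion_le_volume hΩ hΩb hfc hf0 hΦc hΦ2 hΦeq hΦbd hΦpos hlam hu]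

end Torsion

theorem stmt1_general {N : ℕ} (Ω : Set (EuclideanSpace ℝ (Fin N)))
    (hΩo : IsOpen Ω) (hΩb : Bornology.IsBounded Ω)
    (f : EuclideanSpace ℝ (Fin N) → ℝ) (hfc : ContinuousOn f (closure Ω))
    (hf0 : ∀ x ∈ closure Ω, 0 ≤ f x) (hfne : ∃ x ∈ Ω, f x ≠ 0)
    (Φ : EuclideanSpace ℝ (Fin N) → ℝ)
    (hΦc : ContinuousOn Φ (closure Ω)) (hΦ2 : ContDiffOn ℝ 2 Φ Ω)
    (hΦeq : ∀ x ∈ Ω, lap Φ x = -1)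
    (hΦbd : ∀ x ∈ frontier Ω, Φ x = 0)
    (hΦpos : ∀ x ∈ Ω, 0 < Φ x)
    (P : ℝ)
    (lam : ℝ) (hlam : 0 < lam)
    (u : EuclideanSpace ℝ (Fin N) → ℝ) (hu : IsSolutionT Ω f P lam u) :
    lam ≤ ((volume Ω).toReal - P * ∫ x in Ω, Φ x) / (∫ x in Ω, Φ x * f x) ∧
      BddAbove {μ : ℝ | 0 < μ ∧ ∃ v, IsSolutionT Ω f P μ v} :=
  ⟨le_div_of_isSolutionT hΩo hΩb hfc hf0 hfne hΦc hΦ2 hΦeq hΦbd hΦpos hlam hu,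
    _, fun _ ⟨hμ, _, hv⟩ =>
      le_div_of_isSolutionT hΩo hΩb hfc hf0 hfne hΦc hΦ2 hΦeq hΦbd hΦpos hμ hv⟩

/-- If the problem admits a classical solution for the voltage `λ`, then
`λ ≤ (|Ω| - P∫_Ω Φ)/(∫_Ω Φ f)`; in particular the set of admissible voltages is
bounded above (so `λ*_P < ∞`). -/
theorem stmt1 {N : ℕ} (Ω : Set (EuclideanSpace ℝ (Fin N)))
    (hΩo : IsOpen Ω) (hΩb : Bornology.IsBounded Ω) (hΩne : Ω.Nonempty)
    (f : EuclideanSpace ℝ (Fin N) → ℝ) (hfc : ContinuousOn f (closure Ω))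
    (hf0 : ∀ x ∈ closure Ω, 0 ≤ f x) (hfne : ∃ x ∈ Ω, f x ≠ 0)
    (Φ : EuclideanSpace ℝ (Fin N) → ℝ)
    (hΦc : ContinuousOn Φ (closure Ω)) (hΦ2 : ContDiffOn ℝ 2 Φ Ω)
    (hΦeq : ∀ x ∈ Ω, lap Φ x = -1)
    (hΦbd : ∀ x ∈ frontier Ω, Φ x = 0)
    (hΦpos : ∀ x ∈ Ω, 0 < Φ x)
    (Pstar P : ℝ) (hPstar : Pstar = 1 / (⨆ x ∈ Ω, Φ x))
    (hP0 : 0 ≤ P) (hP : P < Pstar)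
    (lam : ℝ) (hlam : 0 < lam)
    (u : EuclideanSpace ℝ (Fin N) → ℝ) (hu : IsSolutionT Ω f P lam u) :
    lam ≤ ((volume Ω).toReal - P * ∫ x in Ω, Φ x) / (∫ x in Ω, Φ x * f x) ∧
      BddAbove {μ : ℝ | 0 < μ ∧ ∃ v, IsSolutionT Ω f P μ v} :=
  stmt1_general Ω hΩo hΩb f hfc hf0 hfne Φ hΦc hΦ2 hΦeq hΦbd hΦpos P lam hlam u hu
end

section
/- The half-period function L(τ) = (1/A)∫₁^τ dy/√(1 + τ(1+τ) - y² - τ(1+τ)/y), defined for τ > 1, satisfies lim_{τ→+∞} L(τ) = π/(2A). -/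
/-!
Under the root, `1 + τ(1+τ) - y² - τ(1+τ)/y = (y-1)(τ-y)(y+τ+1)/y`, so the substitution
`y = 1 + (τ-1)s` turns the integral into `∫₀¹ ds / √(s(1-s)(y+τ+1)/y)`. As `τ → ∞` the integrand
tends to `1/√(1-s²)` and it is dominated by `1/√(s(1-s))`, so dominated convergence gives the
limit `∫₀¹ ds/√(1-s²) = arcsin 1 = π/2`. Both singular functions are integrable because they are
nonnegative derivatives (of `arcsin` and `s ↦ arcsin (2s-1)`).
-/

open Filter Real MeasureTheory Set Topology intervalIntegral
open scoped Interval

lemma ae_mem_Ioo_of_mem_uIoc {a b : ℝ} (hab : a ≤ b) :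
    ∀ᵐ s ∂volume, s ∈ Ι a b → s ∈ Ioo a b := by
  filter_upwards [(Ioo_ae_eq_Ioc (a := a) (b := b) (μ := volume)).mem_iff] with s hs
  rw [uIoc_of_le hab, hs]
  exact id

lemma hasDerivAt_arcsin_two_mul_sub_one {s : ℝ} (hs : s ∈ Ioo 0 1) :
    HasDerivAt (fun x => arcsin (2 * x - 1)) (1 / √(s * (1 - s))) s := by
  have h := (hasDerivAt_arcsin (x := 2 * s - 1) (by linarith [hs.1]) (by linarith [hs.2])).comp s
    (((hasDerivAt_id s).const_mul 2).sub_const 1)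
  rwa [show 1 - (2 * s - 1) ^ 2 = 2 ^ 2 * (s * (1 - s)) by ring, sqrt_mul (by positivity),
    sqrt_sq zero_le_two, mul_one, one_div_mul_eq_div, div_mul_cancel_left₀ two_ne_zero,
    ← one_div] at h

lemma intervalIntegrable_one_div_sqrt_mul_one_sub :
    IntervalIntegrable (fun s => 1 / √(s * (1 - s))) volume 0 1 := by
  refine intervalIntegrable_deriv_of_nonneg (g := fun x => arcsin (2 * x - 1)) (by fun_prop)
    (fun s hs => ?_) (fun s _ => by positivity)
  rw [min_eq_left zero_le_one, max_eq_right zero_le_one] at hs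
  exact hasDerivAt_arcsin_two_mul_sub_one hs

lemma integral_one_div_sqrt_one_sub_sq : ∫ s in (0 : ℝ)..1, 1 / √(1 - s ^ 2) = π / 2 := by
  have hderiv : ∀ s ∈ Ioo (0 : ℝ) 1, HasDerivAt arcsin (1 / √(1 - s ^ 2)) s :=
    fun s hs => hasDerivAt_arcsin (by linarith [hs.1]) hs.2.ne
  have hint : IntervalIntegrable (fun s => 1 / √(1 - s ^ 2)) volume 0 1 :=
    intervalIntegrable_deriv_of_nonneg continuous_arcsin.continuousOn
      (by simpa using hderiv) (fun s _ => by positivity)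
  rw [integral_eq_sub_of_hasDerivAt_of_le zero_le_one continuous_arcsin.continuousOn hderiv hint,
    arcsin_one, arcsin_zero, sub_zero]

lemma one_add_mul_sub_sq_sub_div_eq {τ y : ℝ} (hy : y ≠ 0) :
    1 + τ * (1 + τ) - y ^ 2 - τ * (1 + τ) / y = (y - 1) * (τ - y) * (y + τ + 1) / y := by
  field_simp
  ring

noncomputable def rescaledIntegrand (τ s : ℝ) : ℝ :=
  1 / √(s * (1 - s) * (((τ - 1) * s + τ + 2) / ((τ - 1) * s + 1)))

lemma mul_one_div_sqrt_eq_rescaledIntegrand {τ s : ℝ} (hτ : 1 < τ) (hs : s ∈ Ioo 0 1) :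
    (τ - 1) * (1 / √(1 + τ * (1 + τ) - ((τ - 1) * s + 1) ^ 2
      - τ * (1 + τ) / ((τ - 1) * s + 1))) = rescaledIntegrand τ s := by
  obtain ⟨hs0, hs1⟩ := hs
  have hy : 0 < (τ - 1) * s + 1 := by nlinarith
  rw [one_add_mul_sub_sq_sub_div_eq hy.ne', rescaledIntegrand,
    show ((τ - 1) * s + 1 - 1) * (τ - ((τ - 1) * s + 1)) * ((τ - 1) * s + 1 + τ + 1)
        / ((τ - 1) * s + 1)
      = (τ - 1) ^ 2 * (s * (1 - s) * (((τ - 1) * s + τ + 2) / ((τ - 1) * s + 1))) by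
      field_simp; ring,
    sqrt_mul (sq_nonneg _), sqrt_sq (by linarith), mul_one_div,
    div_mul_cancel_left₀ (by linarith), one_div]

lemma integral_eq_integral_rescaledIntegrand {τ : ℝ} (hτ : 1 < τ) :
    ∫ y in (1 : ℝ)..τ, 1 / √(1 + τ * (1 + τ) - y ^ 2 - τ * (1 + τ) / y)
      = ∫ s in (0 : ℝ)..1, rescaledIntegrand τ s := by
  have h := smul_integral_comp_mul_add (a := 0) (b := 1)
    (f := fun y => 1 / √(1 + τ * (1 + τ) - y ^ 2 - τ * (1 + τ) / y)) (τ - 1) 1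
  rw [mul_zero, zero_add, mul_one, sub_add_cancel] at h
  rw [← h, smul_eq_mul, ← intervalIntegral.integral_const_mul]
  refine integral_congr_ae ?_
  filter_upwards [ae_mem_Ioo_of_mem_uIoc zero_le_one] with s hs hmem
  exact mul_one_div_sqrt_eq_rescaledIntegrand hτ (hs hmem)

lemma rescaledIntegrand_le {τ s : ℝ} (hτ : 0 ≤ τ) (hs : s ∈ Ioo 0 1) :
    rescaledIntegrand τ s ≤ 1 / √(s * (1 - s)) := by
  obtain ⟨hs0, hs1⟩ := hs
  have hy : 0 < (τ - 1) * s + 1 := by nlinarith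
  refine one_div_le_one_div_of_le (sqrt_pos.2 (by nlinarith)) (sqrt_le_sqrt ?_)
  exact le_mul_of_one_le_right (by nlinarith) ((one_le_div hy).2 (by linarith))

lemma tendsto_rescaledIntegrand {s : ℝ} (hs : s ∈ Ioo 0 1) :
    Tendsto (fun τ => rescaledIntegrand τ s) atTop (𝓝 (1 / √(1 - s ^ 2))) := by
  obtain ⟨hs0, hs1⟩ := hs
  have hcont : ContinuousAt (fun t => (s + 1 + (2 - s) * t) / (s + (1 - s) * t)) 0 :=
    ContinuousAt.div (by fun_prop) (by fun_prop) (by simpa using hs0.ne')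
  have h0 : Tendsto (fun t => (s + 1 + (2 - s) * t) / (s + (1 - s) * t)) (𝓝 0)
      (𝓝 ((s + 1) / s)) := by
    simpa using hcont.tendsto
  have hq : Tendsto (fun τ => ((τ - 1) * s + τ + 2) / ((τ - 1) * s + 1)) atTop
      (𝓝 ((s + 1) / s)) := by
    refine (h0.comp tendsto_inv_atTop_zero).congr' ?_
    filter_upwards [eventually_gt_atTop 0] with τ hτ
    rw [Function.comp_apply, ← mul_div_mul_left _ _ hτ.ne']
    congr 1 <;> field_simp <;> ring
  have hval : s * (1 - s) * ((s + 1) / s) = 1 - s ^ 2 := by field_simp; ring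
  have h := hq.const_mul (s * (1 - s))
  rw [hval] at h
  exact tendsto_const_nhds.div h.sqrt (sqrt_ne_zero'.2 (by nlinarith))

lemma tendsto_integral_rescaledIntegrand :
    Tendsto (fun τ => ∫ s in (0 : ℝ)..1, rescaledIntegrand τ s) atTop (𝓝 (π / 2)) := by
  rw [← integral_one_div_sqrt_one_sub_sq]
  refine tendsto_integral_filter_of_dominated_convergence _
    (Eventually.of_forall fun τ => Measurable.aestronglyMeasurable (by
      unfold rescaledIntegrand; fun_prop)) ?_ intervalIntegrable_one_div_sqrt_mul_one_sub ?_
  · filter_upwards [eventually_ge_atTop 0] with τ hτ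
    filter_upwards [ae_mem_Ioo_of_mem_uIoc zero_le_one] with s hs hmem
    rw [norm_of_nonneg (by unfold rescaledIntegrand; positivity)]
    exact rescaledIntegrand_le hτ (hs hmem)
  · filter_upwards [ae_mem_Ioo_of_mem_uIoc zero_le_one] with s hs hmem
    exact tendsto_rescaledIntegrand (hs hmem)

theorem stmt9_general (A : ℝ) :
    Tendsto (fun τ : ℝ =>
        (1 / A) * ∫ y in (1 : ℝ)..τ,
          1 / Real.sqrt (1 + τ * (1 + τ) - y ^ 2 - τ * (1 + τ) / y))
      atTop (nhds (π / (2 * A))) := by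
  have h := tendsto_integral_rescaledIntegrand.congr' <| by
    filter_upwards [eventually_gt_atTop 1] with τ hτ
    exact (integral_eq_integral_rescaledIntegrand hτ).symm
  convert h.const_mul (1 / A) using 2
  ring

/-- The half-period `L(τ) = (1/A)∫₁^τ dy/√(1 + τ(1+τ) - y² - τ(1+τ)/y)` tends to
`π/(2A)` as `τ → +∞`. -/
theorem stmt9 (A : ℝ) (hA : 0 < A) :
    Tendsto (fun τ : ℝ =>
        (1 / A) * ∫ y in (1 : ℝ)..τ,
          1 / Real.sqrt (1 + τ * (1 + τ) - y ^ 2 - τ * (1 + τ) / y))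
      atTop (nhds (π / (2 * A))) :=
  stmt9_general A
end

section
/- (Key integral-decay lemma) Let Z : (t₀, +∞) → [0, ∞) be measurable with Z ∈ L²((t₀,+∞)), and let ζ ∈ (0, 1/2). If there exist constants C > 0 and T₀ ≥ t₀ such that ∫_t^{+∞} Z(s)² ds ≤ C·Z(t)^{1/(1-ζ)} for almost every t ≥ T₀, then Z ∈ L¹((T₀, +∞)). -/
/-!
Write `Y t = ∫ s in Ioi t, Z s ^ 2` and `p = 2 (1 - ζ) ∈ (1, 2)`. The hypothesis reads
`Y ^ p ≤ C ^ p Z ^ 2` a.e.; integrating it over `(a, b]` and using that `Y` is nonincreasing gives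
`(b - a) Y(b) ^ p ≤ C ^ p Y(a)`. Along the dyadic points `T 2 ^ k` this recursion forces
`Y (T 2 ^ k) ≤ M ρ ^ k` with `ρ ^ (p - 1) = 1 / 2`, and `ρ < 1 / 2` because `p < 2`. By
Cauchy–Schwarz, `∫ Z` over `(T 2 ^ k, T 2 ^ (k + 1)]` is at most `√(T 2 ^ k Y (T 2 ^ k))`,
which is `O(√(2 ρ) ^ k)`, a summable geometric sequence.
-/

open Set MeasureTheory Filter

lemma rpow_two_mul_le_of_le_mul_rpow_one_div {y z C q : ℝ} (hy : 0 ≤ y) (hz : 0 ≤ z)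
    (hC : 0 ≤ C) (hq : 0 < q) (h : y ≤ C * z ^ (1 / q)) : y ^ (2 * q) ≤ C ^ (2 * q) * z ^ 2 :=
  calc y ^ (2 * q) ≤ (C * z ^ (1 / q)) ^ (2 * q) := Real.rpow_le_rpow hy h (by positivity)
    _ = C ^ (2 * q) * z ^ 2 := by
      rw [Real.mul_rpow hC (by positivity), ← Real.rpow_mul hz,
        show 1 / q * (2 * q) = 2 by field_simp, Real.rpow_two]

lemma exists_rpow_eq_div_two_of_lt_two {p : ℝ} (hp1 : 1 < p) (hp2 : p < 2) :
    ∃ ρ : ℝ, 0 < ρ ∧ ρ ^ p = ρ / 2 ∧ 2 * ρ < 1 := by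
  set ρ : ℝ := (1 / 2) ^ (p - 1)⁻¹
  have hρ : 0 < ρ := by positivity
  refine ⟨ρ, hρ, ?_, ?_⟩
  · have : ρ ^ (p - 1) = 1 / 2 := Real.rpow_inv_rpow (by norm_num) (by linarith)
    rw [Real.rpow_sub_one hρ.ne'] at this
    field_simp at this ⊢
    linarith
  · have : ρ < (1 / 2) ^ (1 : ℝ) := Real.rpow_lt_rpow_of_exponent_gt (by norm_num) (by norm_num)
      ((one_lt_inv₀ (by linarith)).2 (by linarith))
    linarith [Real.rpow_one (1 / 2 : ℝ)]

lemma exists_le_mul_pow_of_rpow_succ_le {p A ρ : ℝ} (hp : 1 < p) (hA : 0 < A) (hρ : 0 < ρ)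
    (hρp : ρ ^ p = ρ / 2) {x : ℕ → ℝ} (hx : ∀ k, 0 ≤ x k)
    (h : ∀ k, x (k + 1) ^ p ≤ A * x k / 2 ^ k) : ∃ M, ∀ k, x k ≤ M * ρ ^ k := by
  set M := max (x 0) ((A / ρ ^ p) ^ (p - 1)⁻¹)
  have hM : 0 < M := lt_max_of_lt_right (by positivity)
  have hAM : A * M ≤ M ^ p * ρ ^ p := by
    have : A / ρ ^ p ≤ M ^ (p - 1) := by
      calc A / ρ ^ p = ((A / ρ ^ p) ^ (p - 1)⁻¹) ^ (p - 1) :=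
            (Real.rpow_inv_rpow (by positivity) (by linarith)).symm
        _ ≤ M ^ (p - 1) := by gcongr; exact le_max_right _ _
    rw [Real.rpow_sub_one hM.ne', div_le_iff₀ (by positivity)] at this
    calc A * M ≤ M ^ p / M * ρ ^ p * M := by gcongr
      _ = M ^ p * ρ ^ p := by field_simp
  refine ⟨M, fun k => ?_⟩
  induction k with
  | zero => simp [M]
  | succ k ih =>
    rw [← Real.rpow_le_rpow_iff (hx _) (by positivity) (by linarith : 0 < p)]
    calc x (k + 1) ^ p ≤ A * x k / 2 ^ k := h k
      _ ≤ A * (M * ρ ^ k) / 2 ^ k := by gcongr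
      _ = A * M * (ρ / 2) ^ k := by rw [div_pow]; ring
      _ ≤ M ^ p * ρ ^ p * (ρ / 2) ^ k := by gcongr
      _ = (M * ρ ^ (k + 1)) ^ p := by
        rw [Real.mul_rpow hM.le (by positivity), ← Real.rpow_pow_comm hρ.le, hρp, pow_succ]
        ring

section Tail

variable {g : ℝ → ℝ} {a : ℝ}

lemma antitoneOn_setIntegral_Ioi (hg : IntegrableOn g (Ioi a)) (hg0 : ∀ s ∈ Ioi a, 0 ≤ g s) :
    AntitoneOn (fun t => ∫ s in Ioi t, g s) (Ici a) := fun _ ht _ _ htu =>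
  setIntegral_mono_set (hg.mono_set (Ioi_subset_Ioi ht))
    (ae_restrict_of_forall_mem measurableSet_Ioi fun s hs => hg0 s (lt_of_le_of_lt ht hs : a < s))
    (Ioi_subset_Ioi htu).eventuallyLE

lemma mul_rpow_setIntegral_Ioi_le {b c p : ℝ} (hg : IntegrableOn g (Ioi a))
    (hg0 : ∀ s ∈ Ioi a, 0 ≤ g s) (hab : a ≤ b) (hc : 0 ≤ c) (hp : 0 ≤ p)
    (hkey : ∀ᵐ s ∂volume.restrict (Ioc a b), (∫ t in Ioi s, g t) ^ p ≤ c * g s) :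
    (b - a) * (∫ t in Ioi b, g t) ^ p ≤ c * ∫ t in Ioi a, g t := by
  have hmono := antitoneOn_setIntegral_Ioi hg hg0
  have hgab : IntegrableOn g (Ioc a b) := hg.mono_set Ioc_subset_Ioi_self
  calc (b - a) * (∫ t in Ioi b, g t) ^ p = ∫ _ in Ioc a b, (∫ t in Ioi b, g t) ^ p := by
        rw [setIntegral_const, Real.volume_real_Ioc_of_le hab, smul_eq_mul]
    _ ≤ ∫ s in Ioc a b, c * g s := by
        refine setIntegral_mono_ae_restrict (integrableOn_const measure_Ioc_lt_top.ne)
          (hgab.const_mul c) ?_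
        filter_upwards [hkey, ae_restrict_mem measurableSet_Ioc] with s hs hsab
        refine le_trans (Real.rpow_le_rpow ?_ (hmono hsab.1.le hab hsab.2) hp) hs
        exact setIntegral_nonneg measurableSet_Ioi fun t ht => hg0 t (hab.trans_lt ht)
    _ ≤ c * ∫ t in Ioi a, g t := by
        rw [integral_const_mul]
        exact mul_le_mul_of_nonneg_left (setIntegral_mono_set hg
          (ae_restrict_of_forall_mem measurableSet_Ioi hg0) Ioc_subset_Ioi_self.eventuallyLE) hc

lemma exists_setIntegral_Ioi_two_pow_le {p c ρ T : ℝ} (hg : IntegrableOn g (Ioi a))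
    (hg0 : ∀ s ∈ Ioi a, 0 ≤ g s) (hp : 1 < p) (hc : 0 < c) (hρ : 0 < ρ) (hρp : ρ ^ p = ρ / 2)
    (hT : 0 < T) (haT : a ≤ T)
    (hkey : ∀ᵐ s ∂volume.restrict (Ioi a), (∫ t in Ioi s, g t) ^ p ≤ c * g s) :
    ∃ M, ∀ k : ℕ, ∫ t in Ioi (T * 2 ^ k), g t ≤ M * ρ ^ k := by
  have hk (k : ℕ) : a ≤ T * 2 ^ k :=
    haT.trans (le_mul_of_one_le_right hT.le (one_le_pow₀ one_le_two))
  refine exists_le_mul_pow_of_rpow_succ_le hp (div_pos hc hT) hρ hρp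
    (fun k => setIntegral_nonneg measurableSet_Ioi fun t ht => hg0 t ((hk k).trans_lt ht))
    fun k => ?_
  have hle : T * 2 ^ k ≤ T * 2 ^ (k + 1) := by gcongr; exacts [one_le_two, k.le_succ]
  have := mul_rpow_setIntegral_Ioi_le (hg.mono_set (Ioi_subset_Ioi (hk k)))
    (fun s hs => hg0 s ((hk k).trans_lt hs)) hle hc.le (by linarith)
    (ae_restrict_of_ae_restrict_of_subset
      (Ioc_subset_Ioi_self.trans (Ioi_subset_Ioi (hk k))) hkey)
  rw [show T * 2 ^ (k + 1) - T * 2 ^ k = T * 2 ^ k by ring] at this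
  rw [le_div_iff₀ (by positivity), div_mul_eq_mul_div, le_div_iff₀ hT]
  linarith

end Tail

section SquareIntegrable

variable {α : Type*} [MeasurableSpace α] {μ : Measure α} {s : Set α} {f : α → ℝ}

lemma IntegrableOn.of_sq (hs : μ s ≠ ⊤) (hf : AEStronglyMeasurable f (μ.restrict s))
    (hf2 : IntegrableOn (fun x => f x ^ 2) s μ) : IntegrableOn f s μ :=
  have : Fact (μ s < ⊤) := ⟨hs.lt_top⟩
  ((memLp_two_iff_integrable_sq hf).2 hf2).integrable one_le_two

lemma setIntegral_norm_le_sqrt (hs : μ s ≠ ⊤) (hf : AEStronglyMeasurable f (μ.restrict s))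
    (hf2 : IntegrableOn (fun x => f x ^ 2) s μ) :
    ∫ x in s, ‖f x‖ ∂μ ≤ √(μ.real s * ∫ x in s, f x ^ 2 ∂μ) := by
  have : Fact (μ s < ⊤) := ⟨hs.lt_top⟩
  have h2 : MemLp (fun x => ‖f x‖) (ENNReal.ofReal 2) (μ.restrict s) := by
    rw [ENNReal.ofReal_ofNat]
    exact ((memLp_two_iff_integrable_sq hf).2 hf2).norm
  have := integral_mul_le_Lp_mul_Lq_of_nonneg Real.HolderConjugate.two_two
    (Eventually.of_forall fun _ => zero_le_one) (Eventually.of_forall fun x => norm_nonneg (f x))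
    (memLp_const 1) h2
  rw [Real.sqrt_eq_rpow, Real.mul_rpow measureReal_nonneg
    (setIntegral_nonneg_of_ae_restrict (Eventually.of_forall fun x => sq_nonneg (f x)))]
  simpa [measureReal_def] using this

end SquareIntegrable

lemma integrableOn_Ioi_of_summable_intervalIntegral_norm {E : Type*} [NormedAddCommGroup E]
    {μ : Measure ℝ} {f : ℝ → E} {a : ℕ → ℝ} (ha : Monotone a) (ha_top : Tendsto a atTop atTop)
    (hf : ∀ k, IntervalIntegrable f μ (a k) (a (k + 1)))
    (hsum : Summable fun k => ∫ x in a k..a (k + 1), ‖f x‖ ∂μ) :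
    IntegrableOn f (Ioi (a 0)) μ := by
  refine integrableOn_Ioi_of_intervalIntegral_norm_bounded
    (∑' k, ∫ x in a k..a (k + 1), ‖f x‖ ∂μ) (a 0) (fun n => ?_) ha_top
    (Eventually.of_forall fun n => ?_)
  · exact (intervalIntegrable_iff_integrableOn_Ioc_of_le (ha (Nat.zero_le n))).1
      (IntervalIntegrable.trans_iterate fun k _ => hf k)
  · rw [← intervalIntegral.sum_integral_adjacent_intervals fun k _ => (hf k).norm]
    exact hsum.sum_le_tsum _ fun k _ =>
      intervalIntegral.integral_nonneg (ha k.le_succ) fun _ _ => norm_nonneg _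

lemma integrableOn_Ioi_of_setIntegral_Ioi_sq_two_pow_le {Z : ℝ → ℝ} {T M ρ : ℝ} (hT : 0 < T)
    (hZm : AEStronglyMeasurable Z (volume.restrict (Ioi T)))
    (hZ2 : IntegrableOn (fun t => Z t ^ 2) (Ioi T)) (hρ : 0 ≤ ρ) (hρ2 : 2 * ρ < 1)
    (hM : ∀ k : ℕ, ∫ t in Ioi (T * 2 ^ k), Z t ^ 2 ≤ M * ρ ^ k) :
    IntegrableOn Z (Ioi T) := by
  set a : ℕ → ℝ := fun k => T * 2 ^ k
  have ha : Monotone a := fun _ _ h =>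
    mul_le_mul_of_nonneg_left (pow_le_pow_right₀ one_le_two h) hT.le
  have hTa (k : ℕ) : T ≤ a k := by simpa [a] using ha (Nat.zero_le k)
  have hIoc (k : ℕ) : Ioc (a k) (a (k + 1)) ⊆ Ioi T :=
    Ioc_subset_Ioi_self.trans (Ioi_subset_Ioi (hTa k))
  have hM0 : 0 ≤ M := by
    simpa using (setIntegral_nonneg measurableSet_Ioi fun t _ => sq_nonneg (Z t)).trans (hM 0)
  set r := √(2 * ρ)
  have hblock (k : ℕ) : ∫ t in a k..a (k + 1), ‖Z t‖ ≤ √(T * M) * r ^ k := by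
    rw [intervalIntegral.integral_of_le (ha k.le_succ)]
    refine (setIntegral_norm_le_sqrt measure_Ioc_lt_top.ne (hZm.mono_set (hIoc k))
      (hZ2.mono_set (hIoc k))).trans ?_
    rw [Real.volume_real_Ioc_of_le (ha k.le_succ)]
    calc √((a (k + 1) - a k) * ∫ t in Ioc (a k) (a (k + 1)), Z t ^ 2)
        ≤ √(T * 2 ^ k * (M * ρ ^ k)) := by
          gcongr
          · exact (show a (k + 1) - a k = T * 2 ^ k by simp only [a]; ring).le
          · exact (setIntegral_mono_set (hZ2.mono_set (Ioi_subset_Ioi (hTa k)))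
              (ae_restrict_of_forall_mem measurableSet_Ioi fun t _ => sq_nonneg (Z t))
              Ioc_subset_Ioi_self.eventuallyLE).trans (hM k)
      _ = √(T * M) * r ^ k := by
          rw [← Real.sqrt_sq (pow_nonneg (Real.sqrt_nonneg _) k),
            ← Real.sqrt_mul' _ (sq_nonneg _), ← pow_mul, mul_comm k, pow_mul,
            Real.sq_sqrt (by positivity)]
          ring_nf
  rw [show T = a 0 by simp [a]]
  refine integrableOn_Ioi_of_summable_intervalIntegral_norm ha ?_ ?_ ?_
  · exact (tendsto_pow_atTop_atTop_of_one_lt one_lt_two).const_mul_atTop hT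
  · exact fun k => (intervalIntegrable_iff_integrableOn_Ioc_of_le (ha k.le_succ)).2
      (IntegrableOn.of_sq measure_Ioc_lt_top.ne (hZm.mono_set (hIoc k)) (hZ2.mono_set (hIoc k)))
  · refine Summable.of_nonneg_of_le (fun k => ?_) hblock
      ((summable_geometric_of_lt_one (Real.sqrt_nonneg _) ?_).mul_left _)
    · exact intervalIntegral.integral_nonneg (ha k.le_succ) fun _ _ => norm_nonneg _
    · rw [Real.sqrt_lt' one_pos]; linarith

/-- Key integral-decay lemma: if `Z ≥ 0` is square integrable on `(t₀,∞)` and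
`∫_t^∞ Z² ≤ C Z(t)^{1/(1-ζ)}` for a.e. `t ≥ T₀`, with `ζ ∈ (0,1/2)`,
then `Z ∈ L¹((T₀,∞))`. -/
theorem stmt13 (t₀ : ℝ) (Z : ℝ → ℝ) (hZm : Measurable Z)
    (hZnn : ∀ t ∈ Ioi t₀, 0 ≤ Z t)
    (hZL2 : IntegrableOn (fun t => Z t ^ 2) (Ioi t₀))
    (ζ : ℝ) (hζ : ζ ∈ Ioo (0 : ℝ) (1 / 2))
    (C T₀ : ℝ) (hC : 0 < C) (hT₀ : t₀ ≤ T₀)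
    (hkey : ∀ᵐ t ∂(volume.restrict (Ioi T₀)),
      (∫ s in Ioi t, Z s ^ 2) ≤ C * Z t ^ ((1 : ℝ) / (1 - ζ))) :
    IntegrableOn Z (Ioi T₀) := by
  obtain ⟨hζ0, hζ2⟩ := hζ
  have hZ2 : IntegrableOn (fun t => Z t ^ 2) (Ioi T₀) := hZL2.mono_set (Ioi_subset_Ioi hT₀)
  have hkey_pow : ∀ᵐ t ∂(volume.restrict (Ioi T₀)),
      (∫ s in Ioi t, Z s ^ 2) ^ (2 * (1 - ζ)) ≤ C ^ (2 * (1 - ζ)) * Z t ^ 2 := by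
    filter_upwards [hkey, ae_restrict_mem measurableSet_Ioi] with t ht hT₀t
    exact rpow_two_mul_le_of_le_mul_rpow_one_div
      (setIntegral_nonneg measurableSet_Ioi fun s _ => sq_nonneg (Z s))
      (hZnn t (hT₀.trans_lt hT₀t)) hC.le (by linarith) ht
  obtain ⟨ρ, hρ0, hρp, hρ2⟩ :=
    exists_rpow_eq_div_two_of_lt_two (p := 2 * (1 - ζ)) (by linarith) (by linarith)
  have hT : T₀ ≤ max T₀ 1 := le_max_left _ _
  obtain ⟨M, hM⟩ := exists_setIntegral_Ioi_two_pow_le hZ2 (fun t _ => sq_nonneg (Z t))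
    (by linarith) (by positivity) hρ0 hρp (by positivity) hT hkey_pow
  rw [← Ioc_union_Ioi_eq_Ioi hT]
  exact (IntegrableOn.of_sq measure_Ioc_lt_top.ne hZm.aestronglyMeasurable.restrict
    (hZ2.mono_set Ioc_subset_Ioi_self)).union
    (integrableOn_Ioi_of_setIntegral_Ioi_sq_two_pow_le (by positivity)
      hZm.aestronglyMeasurable.restrict (hZ2.mono_set (Ioi_subset_Ioi hT)) hρ0.le hρ2 hM)
end

section
/- Suppose H : [T₁, ∞) → ℝ is differentiable, H ≥ H_∞, and satisfies H'(t) + C₁(H(t) - H_∞)^{2(1-θ)} ≤ C₂ e^{-2βt} for all t > T₁, where C₁, C₂, β > 0 and θ ∈ (0, 1/2). Then there exists C > 0 such that H(t) - H_∞ ≤ C(1+t)^{-1/(1-2θ)} for all sufficiently large t. -/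
/-!
With `p = 2(1 - θ)` and `α = 1/(1 - 2θ)` one has `α p = α + 1`, so the barrier
`B t = A (1 + t)^{-α}` satisfies `B' + C₁ B^p = (C₁ A^p - α A)(1 + t)^{-α-1}`. As `p > 1`,
a large `A` makes this exceed `(1 + t)^{-α-1}`, which eventually dominates the forcing
`C₂ e^{-2βt}`. So at a contact point of `H - H_∞` with `B` the derivative of `H - H_∞` is
strictly smaller than that of `B`, and `H - H_∞ ≤ B` persists from any time at which `A`
dominates the initial value.
-/

open Real Filter

lemma eventually_mul_exp_neg_le_one_add_rpow (C γ : ℝ) {c : ℝ} (hc : 0 < c) :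
    ∀ᶠ t in atTop, C * exp (-c * t) ≤ (1 + t) ^ γ := by
  have hshift : Tendsto (fun t : ℝ => 1 + t) atTop atTop :=
    tendsto_atTop_add_const_left _ _ tendsto_id
  have hlo := ((isLittleO_exp_neg_mul_rpow_atTop hc γ).comp_tendsto hshift).const_mul_left
    (C * exp c)
  filter_upwards [hlo.eventuallyLE, eventually_gt_atTop (-1)] with t hle ht
  have hexp : C * exp c * exp (-c * (1 + t)) = C * exp (-c * t) := by
    rw [mul_assoc, ← exp_add]; ring_nf
  simp only [Function.comp_apply, hexp, norm_eq_abs,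
    abs_of_pos (rpow_pos_of_pos (by linarith : (0 : ℝ) < 1 + t) γ)] at hle
  exact (le_abs_self _).trans hle

lemma eventually_mul_add_one_lt_mul_rpow (α : ℝ) {c p : ℝ} (hc : 0 < c) (hp : 1 < p) :
    ∀ᶠ A in atTop, α * A + 1 < c * A ^ p := by
  filter_upwards [eventually_ge_atTop 1,
    (tendsto_rpow_atTop (sub_pos.2 hp)).eventually_ge_atTop ((|α| + 2) / c)] with A hA1 hAp
  have hApow : A ^ p = A ^ (p - 1) * A := by
    rw [← rpow_add_one (by positivity), sub_add_cancel]
  have : (|α| + 2) * A ≤ c * A ^ p := by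
    rw [hApow, ← mul_assoc]
    exact mul_le_mul_of_nonneg_right ((div_le_iff₀' hc).1 hAp) (by positivity)
  nlinarith [le_abs_self α]

lemma hasDerivAt_mul_one_add_rpow (A r : ℝ) {s : ℝ} (hs : 0 < 1 + s) :
    HasDerivAt (fun x => A * (1 + x) ^ r) (A * (r * (1 + s) ^ (r - 1))) s := by
  simpa using (((hasDerivAt_id s).const_add 1).rpow_const (p := r) (Or.inl hs.ne')).const_mul A

lemma le_mul_one_add_rpow_neg_of_hasDerivAt {u u' : ℝ → ℝ} {c A α p T : ℝ}
    (hαp : α * p = α + 1) (hA : 0 ≤ A) (hAc : α * A + 1 < c * A ^ p) (hT : -1 < T)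
    (hu : ∀ t ≥ T, HasDerivAt u (u' t) t)
    (hineq : ∀ t ≥ T, u' t + c * u t ^ p ≤ (1 + t) ^ (-α - 1))
    (hinit : u T ≤ A * (1 + T) ^ (-α)) :
    ∀ t ≥ T, u t ≤ A * (1 + t) ^ (-α) := by
  have hpos : ∀ s ≥ T, 0 < 1 + s := fun s hs => by linarith
  have hB (s : ℝ) (hs : s ≥ T) := hasDerivAt_mul_one_add_rpow A (-α) (hpos s hs)
  intro t ht
  refine image_le_of_deriv_right_lt_deriv_boundary' (f' := u')
    (B' := fun s => A * (-α * (1 + s) ^ (-α - 1)))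
    (fun s hs => (hu s hs.1).continuousAt.continuousWithinAt)
    (fun s hs => (hu s hs.1).hasDerivWithinAt) hinit
    (fun s hs => (hB s hs.1).continuousAt.continuousWithinAt)
    (fun s hs => (hB s hs.1).hasDerivWithinAt)
    (fun s hs heq => ?_) ⟨ht, le_rfl⟩
  have hs0 := hpos s hs.1
  have hbarrier : u s ^ p = A ^ p * (1 + s) ^ (-α - 1) := by
    rw [heq, mul_rpow hA (rpow_nonneg hs0.le _), ← rpow_mul hs0.le, neg_mul, hαp, neg_add']
  have := hineq s hs.1
  rw [hbarrier] at this
  nlinarith [rpow_pos_of_pos hs0 (-α - 1)]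

theorem stmt14_general (H : ℝ → ℝ) (Hinf T₁ C₁ C₂ β θ : ℝ)
    (hC₁ : 0 < C₁) (hβ : 0 < β) (hθ : θ ∈ Set.Ioo (0 : ℝ) (1 / 2))
    (hdiff : ∀ t > T₁, DifferentiableAt ℝ H t)
    (hineq : ∀ t > T₁,
      deriv H t + C₁ * (H t - Hinf) ^ (2 * (1 - θ)) ≤ C₂ * Real.exp (-2 * β * t)) :
    ∃ C > 0, ∃ T : ℝ, ∀ t ≥ T,
      H t - Hinf ≤ C * (1 + t) ^ (-(1 / (1 - 2 * θ))) := by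
  set α := 1 / (1 - 2 * θ)
  have h2θ : 0 < 1 - 2 * θ := by linarith [hθ.2]
  have hαp : α * (2 * (1 - θ)) = α + 1 := by simp only [α]; field_simp; ring
  obtain ⟨T, hT⟩ := eventually_atTop.1 <| (eventually_gt_atTop (max T₁ (-1))).and <|
    eventually_mul_exp_neg_le_one_add_rpow C₂ (-α - 1) (by positivity : 0 < 2 * β)
  obtain ⟨hT₁, hT_gt⟩ := max_lt_iff.1 (hT T le_rfl).1
  obtain ⟨A, hA, hAc, hAinit⟩ := ((eventually_gt_atTop 0).and <|
    (eventually_mul_add_one_lt_mul_rpow α hC₁ (by linarith : 1 < 2 * (1 - θ))).and <|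
    eventually_ge_atTop ((H T - Hinf) * (1 + T) ^ α)).exists
  refine ⟨A, hA, T, le_mul_one_add_rpow_neg_of_hasDerivAt hαp hA.le hAc hT_gt
    (fun t ht => ((hdiff t (hT₁.trans_le ht)).hasDerivAt.sub_const Hinf))
    (fun t ht => (hineq t (hT₁.trans_le ht)).trans ?_) ?_⟩
  · simpa only [neg_mul] using (hT t ht).2
  · rwa [rpow_neg (by linarith), le_mul_inv_iff₀ (rpow_pos_of_pos (by linarith) _)]

/-- If `H' + C₁(H - H_∞)^{2(1-θ)} ≤ C₂ e^{-2βt}` for `t > T₁`, with `H ≥ H_∞` and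
`θ ∈ (0,1/2)`, then `H(t) - H_∞ ≤ C(1+t)^{-1/(1-2θ)}` for large `t`. -/
theorem stmt14 (H : ℝ → ℝ) (Hinf T₁ C₁ C₂ β θ : ℝ)
    (hC₁ : 0 < C₁) (hC₂ : 0 < C₂) (hβ : 0 < β) (hθ : θ ∈ Set.Ioo (0 : ℝ) (1 / 2))
    (hdiff : ∀ t > T₁, DifferentiableAt ℝ H t)
    (hge : ∀ t ≥ T₁, Hinf ≤ H t)
    (hineq : ∀ t > T₁,
      deriv H t + C₁ * (H t - Hinf) ^ (2 * (1 - θ)) ≤ C₂ * Real.exp (-2 * β * t)) :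
    ∃ C > 0, ∃ T : ℝ, ∀ t ≥ T,
      H t - Hinf ≤ C * (1 + t) ^ (-(1 / (1 - 2 * θ))) :=
  stmt14_general H Hinf T₁ C₁ C₂ β θ hC₁ hβ hθ hdiff hineq
end

section
/- Suppose ū : (0,1] → ℝ is C², bounded, nonnegative with ū(0⁺) = 0, and satisfies (r ū')'(r) ≤ Cλ r^{(α-1)/3} + P r for all r ∈ (0,1), where C, λ > 0, P ≥ 0, α > -2, and lim_{r→0⁺} r ū'(r) = 0. Then ū(r) ≤ (9Cλ/(α+2)²) r^{(α+2)/3} + (P/4) r² for all r ∈ (0,1). -/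
/-!
Both inequalities are integrated from `0` by comparison with the profile `c r ^ p + d r ^ 2`,
`p = (α + 2) / 3`, which vanishes at `0⁺` because `p > 0`. The first integration turns the bound
on `(r ū')'` and `r ū'(0⁺) = 0` into `r ū' ≤ A r ^ p + (P / 2) r ^ 2` with `A p = Cλ`;
dividing by `r` bounds `ū'` by the derivative of `(A / p) r ^ p + (P / 4) r ^ 2`, and the
second integration, using `ū(0⁺) = 0`, gives the claim since `A / p = 9Cλ / (α + 2) ^ 2`.
-/

open Set Filter Topology

lemma le_of_hasDerivAt_le_of_tendsto_nhdsGT {f g f' g' : ℝ → ℝ} {a b L : ℝ}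
    (hf : ∀ x ∈ Ioo a b, HasDerivAt f (f' x) x) (hg : ∀ x ∈ Ioo a b, HasDerivAt g (g' x) x)
    (hfg : ∀ x ∈ Ioo a b, f' x ≤ g' x)
    (hfa : Tendsto f (𝓝[>] a) (𝓝 L)) (hga : Tendsto g (𝓝[>] a) (𝓝 L)) :
    ∀ x ∈ Ioo a b, f x ≤ g x := by
  have hmono : MonotoneOn (g - f) (Ioo a b) := by
    refine monotoneOn_of_hasDerivWithinAt_nonneg (f' := g' - f') (convex_Ioo a b)
      (fun x hx => ((hg x hx).sub (hf x hx)).continuousAt.continuousWithinAt)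
      (fun x hx => ((hg x (interior_subset hx)).sub (hf x (interior_subset hx))).hasDerivWithinAt)
      ?_
    rw [interior_Ioo]
    exact fun x hx => sub_nonneg.2 (hfg x hx)
  intro x hx
  have hlim : Tendsto (g - f) (𝓝[>] a) (𝓝 0) := by
    have h := hga.sub hfa
    rwa [sub_self] at h
  have hle : ∀ᶠ y in 𝓝[>] a, (g - f) y ≤ (g - f) x := by
    filter_upwards [Ioo_mem_nhdsGT hx.1] with y hy
    exact hmono ⟨hy.1, hy.2.trans hx.2⟩ hx hy.2.le
  exact sub_nonneg.1 (le_of_tendsto hlim hle)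

section Profile

variable {c d p : ℝ}

lemma hasDerivAt_mul_rpow_add_mul_sq {x : ℝ} (hx : 0 < x) :
    HasDerivAt (fun r => c * r ^ p + d * r ^ 2) (c * p * x ^ (p - 1) + 2 * d * x) x := by
  refine (((Real.hasDerivAt_rpow_const (Or.inl hx.ne')).const_mul c).add
    ((hasDerivAt_pow 2 x).const_mul d)).congr_deriv ?_
  norm_num
  ring

lemma tendsto_mul_rpow_add_mul_sq_nhdsGT_zero (hp : 0 < p) :
    Tendsto (fun r : ℝ => c * r ^ p + d * r ^ 2) (𝓝[>] 0) (𝓝 0) := by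
  have h : ContinuousAt (fun r : ℝ => c * r ^ p + d * r ^ 2) 0 := by
    fun_prop (disch := exact Or.inr hp.le)
  simpa [Real.zero_rpow hp.ne'] using h.tendsto.mono_left nhdsWithin_le_nhds

lemma le_mul_rpow_add_mul_sq_of_hasDerivAt_le {f f' : ℝ → ℝ} {b : ℝ} (hp : 0 < p)
    (hf : ∀ x ∈ Ioo 0 b, HasDerivAt f (f' x) x) (hf0 : Tendsto f (𝓝[>] 0) (𝓝 0))
    (hf' : ∀ x ∈ Ioo 0 b, f' x ≤ c * p * x ^ (p - 1) + 2 * d * x) :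
    ∀ x ∈ Ioo 0 b, f x ≤ c * x ^ p + d * x ^ 2 :=
  le_of_hasDerivAt_le_of_tendsto_nhdsGT hf (fun _ hx => hasDerivAt_mul_rpow_add_mul_sq hx.1) hf'
    hf0 (tendsto_mul_rpow_add_mul_sq_nhdsGT_zero hp)

lemma le_mul_rpow_sub_one_add_mul_of_mul_le {x y : ℝ} (hx : 0 < x)
    (h : x * y ≤ c * x ^ p + d * x ^ 2) : y ≤ c * x ^ (p - 1) + d * x := by
  have hquot : c * x ^ (p - 1) + d * x = (c * x ^ p + d * x ^ 2) / x := by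
    rw [Real.rpow_sub_one hx.ne']
    field_simp
  rwa [hquot, le_div_iff₀' hx]

end Profile

theorem stmt19_general (C lam P α : ℝ)
    (hα : -2 < α) (ubar : ℝ → ℝ)
    (hsm : ∀ r ∈ Ioo (0 : ℝ) 1, DifferentiableAt ℝ ubar r ∧
      DifferentiableAt ℝ (fun s => s * deriv ubar s) r)
    (h0 : Tendsto ubar (nhdsWithin 0 (Ioi 0)) (nhds 0))
    (hlim : Tendsto (fun r => r * deriv ubar r) (nhdsWithin 0 (Ioi 0)) (nhds 0))
    (hineq : ∀ r ∈ Ioo (0 : ℝ) 1,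
      deriv (fun s => s * deriv ubar s) r ≤ C * lam * r ^ ((α - 1) / 3) + P * r) :
    ∀ r ∈ Ioo (0 : ℝ) 1,
      ubar r ≤ 9 * C * lam / (α + 2) ^ 2 * r ^ ((α + 2) / 3) + P / 4 * r ^ 2 := by
  have hα2 : α + 2 ≠ 0 := by linarith
  have hp : 0 < (α + 2) / 3 := by linarith
  have hexp : (α + 2) / 3 - 1 = (α - 1) / 3 := by ring
  have hr_deriv : ∀ x ∈ Ioo (0 : ℝ) 1,
      x * deriv ubar x ≤ 3 * C * lam / (α + 2) * x ^ ((α + 2) / 3) + P / 2 * x ^ 2 := by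
    refine le_mul_rpow_add_mul_sq_of_hasDerivAt_le hp (fun x hx => (hsm x hx).2.hasDerivAt)
      hlim fun x hx => ?_
    convert hineq x hx using 2
    · rw [hexp]; field_simp
    · ring
  refine le_mul_rpow_add_mul_sq_of_hasDerivAt_le hp (fun x hx => (hsm x hx).1.hasDerivAt)
    h0 fun x hx => ?_
  convert le_mul_rpow_sub_one_add_mul_of_mul_le hx.1 (hr_deriv x hx) using 2
  · field_simp; ring
  · ring

/-- If `ū ≥ 0` is bounded on `(0,1]`, `ū(0⁺)=0`, `lim_{r→0⁺} r ū'(r) = 0`, and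
`(r ū')' ≤ Cλ r^{(α-1)/3} + P r` on `(0,1)`, then
`ū(r) ≤ (9Cλ/(α+2)²) r^{(α+2)/3} + (P/4) r²` on `(0,1)`. -/
theorem stmt19 (C lam P α : ℝ) (hC : 0 < C) (hlam : 0 < lam) (hP : 0 ≤ P)
    (hα : -2 < α) (ubar : ℝ → ℝ)
    (hsm : ∀ r ∈ Ioo (0 : ℝ) 1, DifferentiableAt ℝ ubar r ∧
      DifferentiableAt ℝ (fun s => s * deriv ubar s) r)
    (hbd : ∃ M : ℝ, ∀ r ∈ Ioc (0 : ℝ) 1, ubar r ≤ M)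
    (hnn : ∀ r ∈ Ioc (0 : ℝ) 1, 0 ≤ ubar r)
    (h0 : Tendsto ubar (nhdsWithin 0 (Ioi 0)) (nhds 0))
    (hlim : Tendsto (fun r => r * deriv ubar r) (nhdsWithin 0 (Ioi 0)) (nhds 0))
    (hineq : ∀ r ∈ Ioo (0 : ℝ) 1,
      deriv (fun s => s * deriv ubar s) r ≤ C * lam * r ^ ((α - 1) / 3) + P * r) :
    ∀ r ∈ Ioo (0 : ℝ) 1,
      ubar r ≤ 9 * C * lam / (α + 2) ^ 2 * r ^ ((α + 2) / 3) + P / 4 * r ^ 2 :=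
  stmt19_general C lam P α hα ubar hsm h0 hlim hineq
end
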